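/- arXiv:2307.07156 — 8 statements merged into one kernel-verified Lean document; each statement's English description precedes it below -/
import Mathlib

section
/- Fix real parameters a > 0, Γ > 0, ε > 0, k > 0 and γ > 0. Set c(t) = 2a²(1+εk)e^(−2Γt) and α(t) = −k² + c(t). Suppose C, D : [0,∞) → ℂ are differentiable and satisfy the viscous system i·C'(t) + α(t)·C(t) + c(t)·e^(2γt)·conj(D(t)) = 0 and i·D'(t) + α(t)·D(t) + c(t)·e^(−2γt)·conj(C(t)) = 0 for all t ≥ 0. Then U(t) := C(t)·e^(−γt) + conj(D(t))·e^(γt) is twice differentiable and satisfies U''(t) + (k² − iγ)·(k² − iγ − 4a²(1+εk)e^(−2Γt))·U(t) = 0 for all t ≥ 0. -/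
/-- If `C, D : [0,∞) → ℂ` solve the viscous first-order system (CDeq) (with `γ > 0`), then
`U(t) = C(t)e^{−γt} + conj(D(t))e^{γt}` is twice differentiable and solves equation (2deg):
`U'' + (k² − iγ)(k² − iγ − 4a²(1+εk)e^{−2Γt})U = 0`. -/
theorem stmt_2 (a Γ ε k γ : ℝ) (ha : 0 < a) (hΓ : 0 < Γ) (hε : 0 < ε) (hk : 0 < k)
    (hγ : 0 < γ)
    (c α : ℝ → ℝ)
    (hc : ∀ t, c t = 2 * a ^ 2 * (1 + ε * k) * Real.exp (-2 * Γ * t))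
    (hα : ∀ t, α t = -k ^ 2 + c t)
    (C D C' D' : ℝ → ℂ)
    (hC : ∀ t ≥ (0 : ℝ), HasDerivWithinAt C (C' t) (Set.Ici 0) t)
    (hD : ∀ t ≥ (0 : ℝ), HasDerivWithinAt D (D' t) (Set.Ici 0) t)
    (heqC : ∀ t ≥ (0 : ℝ), Complex.I * C' t + (α t : ℂ) * C t +
      (c t : ℂ) * Complex.exp (2 * (γ : ℂ) * t) * starRingEnd ℂ (D t) = 0)
    (heqD : ∀ t ≥ (0 : ℝ), Complex.I * D' t + (α t : ℂ) * D t +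
      (c t : ℂ) * Complex.exp (-(2 * (γ : ℂ) * t)) * starRingEnd ℂ (C t) = 0)
    (U : ℝ → ℂ)
    (hU : ∀ t : ℝ, U t = C t * Complex.exp (-((γ : ℂ) * t)) +
      starRingEnd ℂ (D t) * Complex.exp ((γ : ℂ) * t)) :
    ∃ U' U'' : ℝ → ℂ, ∀ t ≥ (0 : ℝ),
      HasDerivWithinAt U (U' t) (Set.Ici 0) t ∧
      HasDerivWithinAt U' (U'' t) (Set.Ici 0) t ∧
      U'' t + ((k : ℂ) ^ 2 - Complex.I * (γ : ℂ)) *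
        ((k : ℂ) ^ 2 - Complex.I * (γ : ℂ) -
          4 * (a : ℂ) ^ 2 * (1 + (ε : ℂ) * (k : ℂ)) * Complex.exp (-2 * (Γ : ℂ) * t)) * U t = 0 := by
  refine ⟨fun t => -((γ : ℂ) + Complex.I * (k : ℂ) ^ 2) *
      (C t * Complex.exp (-((γ : ℂ) * t)) - starRingEnd ℂ (D t) * Complex.exp ((γ : ℂ) * t)),
    fun t => -((γ : ℂ) + Complex.I * (k : ℂ) ^ 2) *
      ((Complex.I * ((α t : ℂ) + (c t : ℂ)) - (γ : ℂ)) * U t), ?_⟩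
  intro t ht
  have hC' := hC t ht
  have hD' := hD t ht
  have h1 := heqC t ht
  have h2 := heqD t ht
  set e := Complex.exp ((γ : ℂ) * t) with he
  set f := Complex.exp (-((γ : ℂ) * t)) with hf
  have hef : e * f = 1 := by rw [he, hf, ← Complex.exp_add]; simp
  have h2e : Complex.exp (2 * (γ : ℂ) * t) = e * e := by
    rw [he, ← Complex.exp_add]; congr 1; ring
  have h2f : Complex.exp (-(2 * (γ : ℂ) * t)) = f * f := by
    rw [hf, ← Complex.exp_add]; congr 1; ring
  have hconjf : starRingEnd ℂ f = f := by
    rw [hf, ← Complex.exp_conj]; congr 1; simp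
  have hαc : (α t : ℂ) = -(k : ℂ) ^ 2 + (c t : ℂ) := by rw [hα]; push_cast; ring
  rw [h2e] at h1
  rw [h2f] at h2
  have hC'eq : C' t = Complex.I * ((α t : ℂ) * C t +
      (c t : ℂ) * (e * e) * starRingEnd ℂ (D t)) := by
    linear_combination (-Complex.I) * h1 + C' t * Complex.I_sq
  have hD'eq : D' t = Complex.I * ((α t : ℂ) * D t +
      (c t : ℂ) * (f * f) * starRingEnd ℂ (C t)) := by
    linear_combination (-Complex.I) * h2 + D' t * Complex.I_sq
  have hD'c : starRingEnd ℂ (D' t) = -Complex.I * ((α t : ℂ) * starRingEnd ℂ (D t) +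
      (c t : ℂ) * (f * f) * C t) := by
    rw [hD'eq]
    simp only [map_mul, map_add, Complex.conj_I, Complex.conj_ofReal, Complex.conj_conj, hconjf]
    try ring
  -- exponential derivatives
  have hid : HasDerivAt (fun s : ℝ => (s : ℂ)) 1 t := by
    simpa using (hasDerivAt_id t).ofReal_comp
  have hγt : HasDerivAt (fun s : ℝ => (γ : ℂ) * s) (γ : ℂ) t := by
    simpa using hid.const_mul (γ : ℂ)
  have hEe : HasDerivAt (fun s : ℝ => Complex.exp ((γ : ℂ) * s)) (e * (γ : ℂ)) t := by
    simpa [← he] using hγt.cexp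
  have hEf : HasDerivAt (fun s : ℝ => Complex.exp (-((γ : ℂ) * s))) (f * -(γ : ℂ)) t := by
    simpa [← hf] using hγt.neg.cexp
  have hDc : HasDerivWithinAt (fun s => starRingEnd ℂ (D s)) (starRingEnd ℂ (D' t))
      (Set.Ici 0) t := hD'.star
  -- first derivative
  have hW1 : HasDerivWithinAt
      (fun s => C s * Complex.exp (-((γ : ℂ) * s)) + starRingEnd ℂ (D s) * Complex.exp ((γ : ℂ) * s))
      (C' t * f + C t * (f * -(γ : ℂ)) +
        (starRingEnd ℂ (D' t) * e + starRingEnd ℂ (D t) * (e * (γ : ℂ)))) (Set.Ici 0) t :=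
    (hC'.mul hEf.hasDerivWithinAt).add (hDc.mul hEe.hasDerivWithinAt)
  have key1 : C' t * f + C t * (f * -(γ : ℂ)) +
      (starRingEnd ℂ (D' t) * e + starRingEnd ℂ (D t) * (e * (γ : ℂ))) =
      -((γ : ℂ) + Complex.I * (k : ℂ) ^ 2) * (C t * f - starRingEnd ℂ (D t) * e) := by
    rw [hC'eq, hD'c, hαc]
    linear_combination (Complex.I * (c t : ℂ) * (starRingEnd ℂ (D t) * e - C t * f)) * hef
  have hU1 : HasDerivWithinAt U
      (-((γ : ℂ) + Complex.I * (k : ℂ) ^ 2) * (C t * f - starRingEnd ℂ (D t) * e))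
      (Set.Ici 0) t := by
    rw [← key1]
    exact hW1.congr (fun s _ => hU s) (hU t)
  refine ⟨hU1, ?_, ?_⟩
  · -- second derivative
    have hW2 : HasDerivWithinAt
        (fun s => -((γ : ℂ) + Complex.I * (k : ℂ) ^ 2) *
          (C s * Complex.exp (-((γ : ℂ) * s)) - starRingEnd ℂ (D s) * Complex.exp ((γ : ℂ) * s)))
        (-((γ : ℂ) + Complex.I * (k : ℂ) ^ 2) *
          (C' t * f + C t * (f * -(γ : ℂ)) -
            (starRingEnd ℂ (D' t) * e + starRingEnd ℂ (D t) * (e * (γ : ℂ))))) (Set.Ici 0) t :=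
      ((hC'.mul hEf.hasDerivWithinAt).sub (hDc.mul hEe.hasDerivWithinAt)).const_mul _
    have key2 : -((γ : ℂ) + Complex.I * (k : ℂ) ^ 2) *
        (C' t * f + C t * (f * -(γ : ℂ)) -
          (starRingEnd ℂ (D' t) * e + starRingEnd ℂ (D t) * (e * (γ : ℂ)))) =
        -((γ : ℂ) + Complex.I * (k : ℂ) ^ 2) *
          ((Complex.I * ((α t : ℂ) + (c t : ℂ)) - (γ : ℂ)) * U t) := by
      rw [hC'eq, hD'c, hU t, ← he, ← hf]
      linear_combination (-((γ : ℂ) + Complex.I * (k : ℂ) ^ 2) * Complex.I * (c t : ℂ) *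
        (starRingEnd ℂ (D t) * e + C t * f)) * hef
    rw [key2] at hW2
    exact hW2
  · -- the second-order equation
    have hX : 4 * (a : ℂ) ^ 2 * (1 + (ε : ℂ) * (k : ℂ)) * Complex.exp (-2 * (Γ : ℂ) * t) =
        2 * (c t : ℂ) := by
      have h1 : Complex.exp (-2 * (Γ : ℂ) * t) = ((Real.exp (-2 * Γ * t) : ℝ) : ℂ) := by
        rw [Complex.ofReal_exp]; congr 1; push_cast; ring
      rw [h1, hc]; push_cast; ring
    show -((γ : ℂ) + Complex.I * (k : ℂ) ^ 2) *
        ((Complex.I * ((α t : ℂ) + (c t : ℂ)) - (γ : ℂ)) * U t) +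
      ((k : ℂ) ^ 2 - Complex.I * (γ : ℂ)) * ((k : ℂ) ^ 2 - Complex.I * (γ : ℂ) -
        4 * (a : ℂ) ^ 2 * (1 + (ε : ℂ) * (k : ℂ)) * Complex.exp (-2 * (Γ : ℂ) * t)) * U t = 0
    rw [hαc, hX]
    linear_combination (((k : ℂ) ^ 4 - 2 * (k : ℂ) ^ 2 * (c t : ℂ) + (γ : ℂ) ^ 2) * U t) *
      Complex.I_sq
end

section
/- Fix real parameters a > 0, Γ > 0, ε > 0, k > 0 and set γ = 0. Let E(t) = 4a²·exp(−2Γt) and let M, N be the 4×4 real matrices M = [[0, k²(εk−2)/2, 0, 0], [−k²(εk−2)/2, 0, 0, 0], [0, 0, 0, −k²(2+εk)/2], [0, 0, k²(2+εk)/2, 0]] and N = (1/2)·[[0, 1+5εk, 0, 1+εk], [−(1+5εk), 0, 1+εk, 0], [0, 1+εk, 0, 1−3εk], [1+εk, 0, −(1−3εk), 0]]. Then every differentiable function u : [0,∞) → ℝ⁴ satisfying u'(t) = (M + E(t)N)·u(t) for all t ≥ 0 is bounded: there exists K > 0 with ‖u(t)‖ ≤ K for all t ≥ 0. -/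
/-- In the non-viscous case (`γ = 0`), every solution of the linearized mode system
`u'(t) = (M + E(t)N)u(t)` of the higher-order NLS equation about the damped Stokes wave
is bounded on `[0,∞)`. -/
theorem stmt_3 (a Γ ε k : ℝ) (ha : 0 < a) (hΓ : 0 < Γ) (hε : 0 < ε) (hk : 0 < k)
    (E : ℝ → ℝ) (hE : ∀ t, E t = 4 * a ^ 2 * Real.exp (-2 * Γ * t))
    (M N : Matrix (Fin 4) (Fin 4) ℝ)
    (hM : M = !![0, k ^ 2 * (ε * k - 2) / 2, 0, 0;
                 -(k ^ 2 * (ε * k - 2) / 2), 0, 0, 0;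
                 0, 0, 0, -(k ^ 2 * (2 + ε * k) / 2);
                 0, 0, k ^ 2 * (2 + ε * k) / 2, 0])
    (hN : N = (1 / 2 : ℝ) • !![0, 1 + 5 * ε * k, 0, 1 + ε * k;
                               -(1 + 5 * ε * k), 0, 1 + ε * k, 0;
                               0, 1 + ε * k, 0, 1 - 3 * ε * k;
                               1 + ε * k, 0, -(1 - 3 * ε * k), 0])
    (u : ℝ → Fin 4 → ℝ)
    (hu : ∀ t ≥ (0 : ℝ), HasDerivWithinAt u ((M + E t • N).mulVec (u t)) (Set.Ici 0) t) :
    ∃ K > (0 : ℝ), ∀ t ≥ (0 : ℝ), ‖u t‖ ≤ K := by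
  have hEpos : ∀ t, 0 < E t := by intro t; rw [hE]; positivity
  have hcpos : (0:ℝ) < 1 + ε * k := by nlinarith
  -- key algebraic identity
  have key : ∀ (e : ℝ) (v : Fin 4 → ℝ),
      v 0 * ((M + e • N).mulVec v) 0 + v 1 * ((M + e • N).mulVec v) 1
        + v 2 * ((M + e • N).mulVec v) 2 + v 3 * ((M + e • N).mulVec v) 3
        = e * (1 + ε * k) * (v 0 * v 3 + v 1 * v 2) := by
    intro e v
    subst hM hN
    simp [Matrix.mulVec, dotProduct, Fin.sum_univ_four, Matrix.add_apply,
      Matrix.smul_apply, Matrix.cons_val_zero, Matrix.cons_val_one, Matrix.head_cons,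
      Matrix.cons_val', Matrix.empty_val', Matrix.cons_val_fin_one, Matrix.head_fin_const]
    ring
  set g : ℝ → ℝ := fun t => u t 0 ^ 2 + u t 1 ^ 2 + u t 2 ^ 2 + u t 3 ^ 2 with hgdef
  set F : ℝ → ℝ := fun t => 2 * (1 + ε * k) * a ^ 2 / Γ * Real.exp (-2 * Γ * t) with hFdef
  set h : ℝ → ℝ := fun t => g t * Real.exp (F t) with hhdef
  have hgnonneg : ∀ t, 0 ≤ g t := by intro t; rw [hgdef]; positivity
  have hFnonneg : ∀ t, 0 ≤ F t := by intro t; rw [hFdef]; positivity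
  -- derivative of g
  have hgd : ∀ t ∈ Set.Ici (0:ℝ), HasDerivWithinAt g
      (2 * (E t * (1 + ε * k) * (u t 0 * u t 3 + u t 1 * u t 2))) (Set.Ici 0) t := by
    intro t ht
    have hc : ∀ i : Fin 4, HasDerivWithinAt (fun s => u s i)
        (((M + E t • N).mulVec (u t)) i) (Set.Ici 0) t := by
      intro i
      exact (hasDerivWithinAt_pi.mp (hu t ht)) i
    have hsum := ((((hc 0).pow 2).add ((hc 1).pow 2)).add ((hc 2).pow 2)).add ((hc 3).pow 2)
    refine hsum.congr_deriv ?_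
    symm
    have hkey := key (E t) (u t)
    simp only [pow_one, Nat.cast_ofNat]
    linear_combination -2 * hkey
  -- derivative of F
  have hFd : ∀ t : ℝ, HasDerivAt F (-((1 + ε * k) * E t)) t := by
    intro t
    have h1 : HasDerivAt (fun s : ℝ => -2 * Γ * s) (-2 * Γ) t := by
      simpa using (hasDerivAt_id t).const_mul (-2 * Γ)
    have h2 := (h1.exp).const_mul (2 * (1 + ε * k) * a ^ 2 / Γ)
    refine h2.congr_deriv ?_
    rw [hE]
    field_simp
    ring
  -- derivative of h
  have hhd : ∀ t ∈ Set.Ici (0:ℝ), HasDerivWithinAt h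
      (Real.exp (F t) * ((1 + ε * k) * E t) *
        (2 * (u t 0 * u t 3 + u t 1 * u t 2) - g t)) (Set.Ici 0) t := by
    intro t ht
    have hexp : HasDerivWithinAt (fun s => Real.exp (F s))
        (Real.exp (F t) * (-((1 + ε * k) * E t))) (Set.Ici 0) t :=
      ((hFd t).hasDerivWithinAt).exp
    have := (hgd t ht).mul hexp
    refine this.congr_deriv ?_
    rw [hgdef]
    ring
  have hcont : ContinuousOn h (Set.Ici 0) := fun t ht => (hhd t ht).continuousWithinAt
  have hderivAt : ∀ t ∈ Set.Ioi (0:ℝ), HasDerivAt h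
      (Real.exp (F t) * ((1 + ε * k) * E t) *
        (2 * (u t 0 * u t 3 + u t 1 * u t 2) - g t)) t := by
    intro t ht
    exact (hhd t (Set.mem_Ici.mpr (le_of_lt (Set.mem_Ioi.mp ht)))).hasDerivAt (Ici_mem_nhds ht)
  have hanti : AntitoneOn h (Set.Ici 0) := by
    apply antitoneOn_of_deriv_nonpos (convex_Ici 0) hcont
    · intro t ht
      rw [interior_Ici] at ht
      exact ((hderivAt t ht).differentiableAt).differentiableWithinAt
    · intro t ht
      rw [interior_Ici] at ht
      rw [(hderivAt t ht).deriv]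
      have h1 : 2 * (u t 0 * u t 3 + u t 1 * u t 2) - g t ≤ 0 := by
        simp only [hgdef]
        nlinarith [sq_nonneg (u t 0 - u t 3), sq_nonneg (u t 1 - u t 2)]
      have h2 : 0 < Real.exp (F t) * ((1 + ε * k) * E t) := by
        have := hEpos t
        positivity
      nlinarith
  refine ⟨Real.sqrt (h 0) + 1, by positivity, ?_⟩
  intro t ht
  have hbd : g t ≤ h 0 := by
    calc g t ≤ g t * Real.exp (F t) :=
          le_mul_of_one_le_right (hgnonneg t) (Real.one_le_exp (hFnonneg t))
      _ = h t := rfl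
      _ ≤ h 0 := hanti Set.self_mem_Ici ht ht
  have hnorm : ‖u t‖ ≤ Real.sqrt (h 0) := by
    rw [pi_norm_le_iff_of_nonneg (Real.sqrt_nonneg _)]
    intro i
    have hi : u t i ^ 2 ≤ h 0 := by
      have hgt := hbd
      simp only [hgdef] at hgt
      fin_cases i
      · show u t 0 ^ 2 ≤ h 0; nlinarith [sq_nonneg (u t 1), sq_nonneg (u t 2), sq_nonneg (u t 3)]
      · show u t 1 ^ 2 ≤ h 0; nlinarith [sq_nonneg (u t 0), sq_nonneg (u t 2), sq_nonneg (u t 3)]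
      · show u t 2 ^ 2 ≤ h 0; nlinarith [sq_nonneg (u t 0), sq_nonneg (u t 1), sq_nonneg (u t 3)]
      · show u t 3 ^ 2 ≤ h 0; nlinarith [sq_nonneg (u t 0), sq_nonneg (u t 1), sq_nonneg (u t 2)]
    calc ‖u t i‖ = |u t i| := Real.norm_eq_abs _
      _ ≤ Real.sqrt (h 0) := Real.abs_le_sqrt hi
  linarith
end

section
/- Fix real parameters a > 0, Γ > 0, ε > 0, k > 0 and set γ = 2εkΓ > 0. Let E(t) = 4a²·exp(−2Γt) and let M, N be the 4×4 real matrices M = [[−γ, k²(εk−2)/2, 0, 0], [−k²(εk−2)/2, −γ, 0, 0], [0, 0, γ, −k²(2+εk)/2], [0, 0, k²(2+εk)/2, γ]] and N = (1/2)·[[0, 1+5εk, 0, 1+εk], [−(1+5εk), 0, 1+εk, 0], [0, 1+εk, 0, 1−3εk], [1+εk, 0, −(1−3εk), 0]]. Then there exists a differentiable function u : [0,∞) → ℝ⁴ with u'(t) = (M + E(t)N)·u(t) for all t ≥ 0, u not identically zero, such that lim_{t→∞} (log ‖u(t)‖)/t = γ. In particular this solution grows exponentially in time at rate γ. -/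
open Set Filter

lemma globalExistence (f : ℝ → (Fin 4 → ℝ) → (Fin 4 → ℝ)) (L : ℝ) (hL : 0 < L)
    (hlip : ∀ t ∈ Set.Ici (0:ℝ), ∀ x y, ‖f t x - f t y‖ ≤ L * ‖x - y‖)
    (hf0 : ∀ t, f t 0 = 0)
    (hcont : ∀ x, Continuous (fun t => f t x))
    (x₀ : Fin 4 → ℝ) :
    ∃ u : ℝ → Fin 4 → ℝ, u 0 = x₀ ∧
      ∀ t ≥ (0:ℝ), HasDerivWithinAt u (f t (u t)) (Set.Ici 0) t := by
  set h : ℝ := 1 / (2 * L) with hh_def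
  have hh : 0 < h := by positivity
  -- single step
  have step : ∀ c : ℝ, ∀ y₀ : Fin 4 → ℝ, ∃ g : ℝ → Fin 4 → ℝ, g c = y₀ ∧
      (0 ≤ c → ∀ t ∈ Set.Icc c (c + h),
        HasDerivWithinAt g (f t (g t)) (Set.Icc c (c + h)) t) := by
    intro c y₀
    by_cases hc : 0 ≤ c
    · have hpl : IsPicardLindelof f (tmin := c) (tmax := c + h)
          ⟨c, Set.left_mem_Icc.mpr (by linarith)⟩ y₀ (‖y₀‖₊ + 1) 0
          (L * (2 * ‖y₀‖ + 1)).toNNReal L.toNNReal := by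
        constructor
        · intro t ht
          have ht0 : t ∈ Set.Ici (0:ℝ) := le_trans hc ht.1
          apply LipschitzOnWith.mono _ (Set.subset_univ _)
          rw [lipschitzOnWith_univ]
          apply LipschitzWith.of_dist_le_mul
          intro x y
          rw [dist_eq_norm, dist_eq_norm, Real.coe_toNNReal _ hL.le]
          exact hlip t ht0 x y
        · exact fun x _ => (hcont x).continuousOn
        · intro t ht x hx
          rw [Real.coe_toNNReal _ (by positivity)]
          have ht0 : t ∈ Set.Ici (0:ℝ) := le_trans hc ht.1
          have h1 : ‖f t x‖ ≤ L * ‖x‖ := by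
            have := hlip t ht0 x 0
            simpa [hf0 t] using this
          have h2 : ‖x‖ ≤ 2 * ‖y₀‖ + 1 := by
            have hx' : ‖x - y₀‖ ≤ ‖y₀‖ + 1 := by
              rw [← dist_eq_norm]
              have := Metric.mem_closedBall.mp hx
              push_cast [coe_nnnorm] at this; exact this
            have := norm_sub_norm_le x y₀
            linarith
          calc ‖f t x‖ ≤ L * ‖x‖ := h1
            _ ≤ L * (2 * ‖y₀‖ + 1) := by nlinarith
        · rw [Real.coe_toNNReal _ (by positivity)]
          show L * (2 * ‖y₀‖ + 1) * max (c + h - c) (c - c) ≤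
            ((‖y₀‖₊ + 1 : NNReal) : ℝ) - ((0 : NNReal) : ℝ)
          push_cast [coe_nnnorm]
          have : max (c + h - c) (c - c) = h := by
            rw [max_eq_left] <;> simp [hh.le]
          rw [this, hh_def]
          rw [div_eq_inv_mul, ← mul_assoc]
          have hne : (2 * L) ≠ 0 := by positivity
          have : L * (2 * ‖y₀‖ + 1) * (2 * L)⁻¹ = (2 * ‖y₀‖ + 1) / 2 := by
            field_simp
          rw [mul_comm (L * (2 * ‖y₀‖ + 1)) _, ← mul_assoc] at *
          nlinarith [norm_nonneg y₀, mul_pos hL hL]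
      obtain ⟨g, hg1, hg2⟩ := hpl.exists_eq_forall_mem_Icc_hasDerivWithinAt₀
      exact ⟨g, hg1, fun _ => hg2⟩
    · exact ⟨fun _ => y₀, rfl, fun hc' => absurd hc' hc⟩
  choose F hF1 hF2 using step
  -- recursive pieces
  set G : ℕ → ℝ → Fin 4 → ℝ :=
    fun n => Nat.rec (F 0 x₀) (fun n g => F ((n + 1) * h) (g ((n + 1) * h))) n with hG_def
  have hGs : ∀ n : ℕ, G (n + 1) = F (((n:ℝ) + 1) * h) (G n (((n:ℝ) + 1) * h)) := by
    intro n; rfl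
  have glue : ∀ n : ℕ, G (n + 1) (((n:ℝ) + 1) * h) = G n (((n:ℝ) + 1) * h) := by
    intro n; rw [hGs n]; exact hF1 _ _
  have start : G 0 0 = x₀ := hF1 0 x₀
  have deriv_n : ∀ n : ℕ, ∀ t ∈ Set.Icc ((n:ℝ) * h) (((n:ℝ) + 1) * h),
      HasDerivWithinAt (G n) (f t (G n t)) (Set.Icc ((n:ℝ) * h) (((n:ℝ) + 1) * h)) t := by
    intro n
    have harith : ((n:ℝ) + 1) * h = (n:ℝ) * h + h := by ring
    cases n with
    | zero =>
      intro t ht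
      have h2 := hF2 0 x₀ le_rfl t
      have e1 : ((0:ℕ):ℝ) * h = 0 := by norm_num
      have e2 : (((0:ℕ):ℝ) + 1) * h = 0 + h := by norm_num
      rw [e1, e2] at ht ⊢
      exact h2 ht
    | succ m =>
      intro t ht
      have hc : (0:ℝ) ≤ ((m:ℝ) + 1) * h := by positivity
      have := hF2 (((m:ℝ) + 1) * h) (G m (((m:ℝ) + 1) * h)) hc t
      rw [hGs m]
      push_cast at ht ⊢
      rw [show ((m:ℝ) + 1 + 1) * h = ((m:ℝ) + 1) * h + h by ring] at ht ⊢
      exact this ht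
  set u : ℝ → Fin 4 → ℝ := fun t => G ⌊t / h⌋₊ t with hu_def
  have piece_eq : ∀ n : ℕ, ∀ t ∈ Set.Icc ((n:ℝ) * h) (((n:ℝ) + 1) * h), u t = G n t := by
    intro n t ht
    have ht0 : (0:ℝ) ≤ t := le_trans (by positivity) ht.1
    rcases lt_or_eq_of_le ht.2 with hlt | heq
    · have hfl : ⌊t / h⌋₊ = n := by
        rw [Nat.floor_eq_iff (by positivity)]
        refine ⟨by rw [le_div_iff₀ hh]; exact ht.1, by rw [div_lt_iff₀ hh]; push_cast; exact hlt⟩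
      simp only [hu_def, hfl]
    · have hdiv : t / h = ((n + 1 : ℕ) : ℝ) := by
        push_cast
        rw [heq]
        field_simp
      have hfl : ⌊t / h⌋₊ = n + 1 := by rw [hdiv, Nat.floor_natCast]
      simp only [hu_def, hfl]
      have hg := glue n
      rw [heq]
      exact hg
  have hu0 : u 0 = x₀ := by
    have : ⌊(0:ℝ) / h⌋₊ = 0 := by simp
    simp only [hu_def, this]
    exact start
  refine ⟨u, hu0, ?_⟩
  intro t ht
  obtain ⟨n, hn1, hn2⟩ : ∃ n : ℕ, (n:ℝ) * h ≤ t ∧ t < ((n:ℝ) + 1) * h := by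
    refine ⟨⌊t / h⌋₊, ?_, ?_⟩
    · rw [← le_div_iff₀ hh]
      exact Nat.floor_le (by positivity)
    · rw [← div_lt_iff₀ hh]
      exact Nat.lt_floor_add_one _
  have hmem : t ∈ Set.Icc ((n:ℝ) * h) (((n:ℝ) + 1) * h) := ⟨hn1, hn2.le⟩
  have H1 : HasDerivWithinAt u (f t (u t)) (Set.Icc ((n:ℝ) * h) (((n:ℝ) + 1) * h)) t := by
    have hd := deriv_n n t hmem
    rw [← piece_eq n t hmem] at hd
    exact hd.congr (fun y hy => piece_eq n y hy) (piece_eq n t hmem)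
  rcases lt_or_eq_of_le hn1 with hlt | heq
  · exact H1.mono_of_mem_nhdsWithin (mem_nhdsWithin_of_mem_nhds (Icc_mem_nhds hlt hn2))
  · -- t = n*h : junction or 0
    cases n with
    | zero =>
      have ht0 : t = 0 := by push_cast at heq; linarith
      subst ht0
      apply H1.mono_of_mem_nhdsWithin
      rw [mem_nhdsWithin_iff_exists_mem_nhds_inter]
      refine ⟨Set.Iio ((((0:ℕ):ℝ) + 1) * h), ?_, ?_⟩
      · exact Iio_mem_nhds hn2
      · rintro y ⟨hy1, hy2⟩
        exact ⟨by push_cast; linarith [mem_Ici.mp hy2], hy1.le⟩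
    | succ m =>
      have heq' : ((m:ℝ) + 1) * h = t := by push_cast at heq ⊢; linarith
      have hmem' : t ∈ Set.Icc ((m:ℝ) * h) (((m:ℝ) + 1) * h) := by
        refine ⟨?_, heq'.ge⟩
        nlinarith [hh.le, Nat.cast_nonneg (α := ℝ) m]
      have H0 : HasDerivWithinAt u (f t (u t)) (Set.Icc ((m:ℝ) * h) (((m:ℝ) + 1) * h)) t := by
        have hd := deriv_n m t hmem'
        rw [← piece_eq m t hmem'] at hd
        exact hd.congr (fun y hy => piece_eq m y hy) (piece_eq m t hmem')
      have Hu := H0.union H1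
      have hun : Set.Icc ((m:ℝ) * h) (((m:ℝ) + 1) * h) ∪
          Set.Icc (((m:ℕ).succ : ℝ) * h) ((((m:ℕ).succ : ℝ) + 1) * h)
          = Set.Icc ((m:ℝ) * h) ((((m:ℕ).succ : ℝ) + 1) * h) := by
        rw [show ((m:ℕ).succ : ℝ) * h = ((m:ℝ) + 1) * h by push_cast; ring]
        apply Set.Icc_union_Icc_eq_Icc
        · nlinarith [hh.le, Nat.cast_nonneg (α := ℝ) m]
        · push_cast; nlinarith [hh.le, Nat.cast_nonneg (α := ℝ) m]
      rw [hun] at Hu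
      apply Hu.mono_of_mem_nhdsWithin
      apply mem_nhdsWithin_of_mem_nhds
      apply Icc_mem_nhds
      · rw [← heq']; nlinarith [hh, Nat.cast_nonneg (α := ℝ) m]
      · exact hn2

lemma monoHelper {g g' : ℝ → ℝ}
    (hd : ∀ t ∈ Set.Ici (0:ℝ), HasDerivWithinAt g (g' t) (Set.Ici 0) t)
    (h0 : ∀ t ∈ Set.Ici (0:ℝ), 0 ≤ g' t) : MonotoneOn g (Set.Ici 0) := by
  apply monotoneOn_of_deriv_nonneg (convex_Ici 0)
  · exact fun t ht => (hd t ht).continuousWithinAt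
  · intro t ht
    rw [interior_Ici] at ht
    exact ((hd t (Set.mem_Ici.mpr (le_of_lt ht))).hasDerivAt (Ici_mem_nhds ht)).differentiableAt.differentiableWithinAt
  · intro t ht
    rw [interior_Ici] at ht
    rw [((hd t (Set.mem_Ici.mpr ht.le)).hasDerivAt (Ici_mem_nhds ht)).deriv]
    exact h0 t (Set.mem_Ici.mpr ht.le)

lemma antiHelper {g g' : ℝ → ℝ}
    (hd : ∀ t ∈ Set.Ici (0:ℝ), HasDerivWithinAt g (g' t) (Set.Ici 0) t)
    (h0 : ∀ t ∈ Set.Ici (0:ℝ), g' t ≤ 0) : AntitoneOn g (Set.Ici 0) := by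
  have := monoHelper (g := fun t => -g t) (g' := fun t => -(g' t))
    (fun t ht => (hd t ht).neg) (fun t ht => neg_nonneg.mpr (h0 t ht))
  intro x hx y hy hxy
  have := this hx hy hxy
  simpa using this

lemma tendAux (c b : ℝ) : Filter.Tendsto (fun t : ℝ => c + b / t) Filter.atTop (nhds c) := by
  have h := Filter.Tendsto.div_atTop (tendsto_const_nhds (x := b)) (tendsto_id (α := ℝ))
  simpa using (tendsto_const_nhds (x := c)).add h

set_option maxHeartbeats 2000000 in
/-- In the viscous case (`γ = 2εkΓ > 0`), there exists a nontrivial solution of the linearized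
mode system `u'(t) = (M + E(t)N)u(t)` whose norm grows exponentially at rate `γ`:
`(log ‖u(t)‖)/t → γ` as `t → ∞`. -/
theorem stmt_4 (a Γ ε k : ℝ) (ha : 0 < a) (hΓ : 0 < Γ) (hε : 0 < ε) (hk : 0 < k)
    (γ : ℝ) (hγ : γ = 2 * ε * k * Γ)
    (E : ℝ → ℝ) (hE : ∀ t, E t = 4 * a ^ 2 * Real.exp (-2 * Γ * t))
    (M N : Matrix (Fin 4) (Fin 4) ℝ)
    (hM : M = !![-γ, k ^ 2 * (ε * k - 2) / 2, 0, 0;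
                 -(k ^ 2 * (ε * k - 2) / 2), -γ, 0, 0;
                 0, 0, γ, -(k ^ 2 * (2 + ε * k) / 2);
                 0, 0, k ^ 2 * (2 + ε * k) / 2, γ])
    (hN : N = (1 / 2 : ℝ) • !![0, 1 + 5 * ε * k, 0, 1 + ε * k;
                               -(1 + 5 * ε * k), 0, 1 + ε * k, 0;
                               0, 1 + ε * k, 0, 1 - 3 * ε * k;
                               1 + ε * k, 0, -(1 - 3 * ε * k), 0]) :
    ∃ u : ℝ → Fin 4 → ℝ,
      (∀ t ≥ (0 : ℝ), HasDerivWithinAt u ((M + E t • N).mulVec (u t)) (Set.Ici 0) t) ∧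
      (¬ ∀ t ≥ (0 : ℝ), u t = 0) ∧
      Filter.Tendsto (fun t : ℝ => Real.log ‖u t‖ / t) Filter.atTop (nhds γ) := by
  have hγpos : 0 < γ := by rw [hγ]; positivity
  have hEpos : ∀ t, 0 ≤ E t := by
    intro t; rw [hE]; positivity
  have hEbdd : ∀ t ≥ (0:ℝ), E t ≤ 4 * a ^ 2 := by
    intro t ht
    rw [hE]
    have : Real.exp (-2 * Γ * t) ≤ 1 := Real.exp_le_one_iff.mpr (by nlinarith)
    nlinarith [sq_nonneg a]
  have hEcont : Continuous E := by
    have : E = fun t => 4 * a ^ 2 * Real.exp (-2 * Γ * t) := funext hE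
    rw [this]; fun_prop
  -- Lipschitz setup
  set Mc := LinearMap.toContinuousLinearMap (Matrix.mulVecLin M) with hMc
  set Nc := LinearMap.toContinuousLinearMap (Matrix.mulVecLin N) with hNc
  have hMcv : ∀ z : Fin 4 → ℝ, Mc z = M.mulVec z := by
    intro z; simp [hMc]
  have hNcv : ∀ z : Fin 4 → ℝ, Nc z = N.mulVec z := by
    intro z; simp [hNc]
  set L : ℝ := ‖Mc‖ + 4 * a ^ 2 * ‖Nc‖ + 1 with hL_def
  have hLpos : 0 < L := by positivity
  have hmv : ∀ (t : ℝ) (z : Fin 4 → ℝ), (M + E t • N).mulVec z = Mc z + E t • Nc z := by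
    intro t z
    rw [hMcv, hNcv, Matrix.add_mulVec, Matrix.smul_mulVec]
  obtain ⟨u, hu0, hud⟩ := globalExistence (fun t z => (M + E t • N).mulVec z) L hLpos
    (by -- Lipschitz
      intro t ht x y
      have key : (M + E t • N).mulVec x - (M + E t • N).mulVec y
          = Mc (x - y) + E t • Nc (x - y) := by
        rw [← hmv, Matrix.mulVec_sub]
      rw [key]
      have h1 : ‖Mc (x - y)‖ ≤ ‖Mc‖ * ‖x - y‖ := Mc.le_opNorm _
      have h2 : ‖Nc (x - y)‖ ≤ ‖Nc‖ * ‖x - y‖ := Nc.le_opNorm _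
      have h3 : ‖Mc (x - y) + E t • Nc (x - y)‖ ≤ ‖Mc (x - y)‖ + E t * ‖Nc (x - y)‖ := by
        refine le_trans (norm_add_le _ _) ?_
        rw [norm_smul, Real.norm_eq_abs, abs_of_nonneg (hEpos t)]
      have h4 := hEbdd t ht
      have h5 : (0:ℝ) ≤ ‖x - y‖ := norm_nonneg _
      have h6 : (0:ℝ) ≤ ‖Nc‖ := norm_nonneg _
      have h7 := hEpos t
      rw [hL_def]
      nlinarith [mul_le_mul_of_nonneg_left h2 h7,
        mul_le_mul_of_nonneg_right h4 (mul_nonneg h6 h5)]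
      )
    (fun t => Matrix.mulVec_zero _)
    (by -- continuity in t
      intro x
      have : (fun t => (M + E t • N).mulVec x) = fun t => Mc x + E t • Nc x := by
        funext t; rw [hmv]
      rw [this]
      fun_prop)
    ![0, 0, 1, 0]
  refine ⟨u, hud, ?_, ?_⟩
  · intro hzero
    have h0 := hzero 0 le_rfl
    rw [hu0] at h0
    have := congrFun h0 2
    simp at this
  -- energy functions
  · set σf : ℝ → ℝ := fun t => u t 0 * u t 0 + u t 1 * u t 1 with hσf
    set ρf : ℝ → ℝ := fun t => u t 2 * u t 2 + u t 3 * u t 3 with hρf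
    have hσnn : ∀ t, 0 ≤ σf t := fun t => by
      simp only [hσf]; nlinarith [mul_self_nonneg (u t 0), mul_self_nonneg (u t 1)]
    have hρnn : ∀ t, 0 ≤ ρf t := fun t => by
      simp only [hρf]; nlinarith [mul_self_nonneg (u t 2), mul_self_nonneg (u t 3)]
    have hcomp : ∀ t ∈ Set.Ici (0:ℝ), ∀ i, HasDerivWithinAt (fun τ => u τ i)
        (((M + E t • N).mulVec (u t)) i) (Set.Ici 0) t :=
      fun t ht => hasDerivWithinAt_pi.mp (hud t ht)
    -- derivative of ρ - σ
    have hrd : ∀ t ∈ Set.Ici (0:ℝ), HasDerivWithinAt (fun τ => ρf τ - σf τ)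
        (2 * γ * (ρf t + σf t)) (Set.Ici 0) t := by
      intro t ht
      have h0 := hcomp t ht 0
      have h1 := hcomp t ht 1
      have h2 := hcomp t ht 2
      have h3 := hcomp t ht 3
      have D := ((h2.mul h2).add (h3.mul h3)).sub ((h0.mul h0).add (h1.mul h1))
      refine D.congr_deriv (Eq.symm ?_)
      subst hM hN
      simp only [Matrix.mulVec, dotProduct, Fin.sum_univ_four, hσf, hρf]
      simp [Matrix.cons_val_zero, Matrix.cons_val_one, Matrix.head_cons, Matrix.vecHead, Matrix.vecTail]
      ring
    -- derivative of ρ + σ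
    have hsd : ∀ t ∈ Set.Ici (0:ℝ), HasDerivWithinAt (fun τ => ρf τ + σf τ)
        (2 * γ * (ρf t - σf t)
          + 2 * E t * (1 + ε * k) * (u t 0 * u t 3 + u t 1 * u t 2)) (Set.Ici 0) t := by
      intro t ht
      have h0 := hcomp t ht 0
      have h1 := hcomp t ht 1
      have h2 := hcomp t ht 2
      have h3 := hcomp t ht 3
      have D := ((h2.mul h2).add (h3.mul h3)).add ((h0.mul h0).add (h1.mul h1))
      refine D.congr_deriv (Eq.symm ?_)
      subst hM hN
      simp only [Matrix.mulVec, dotProduct, Fin.sum_univ_four, hσf, hρf]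
      simp [Matrix.cons_val_zero, Matrix.cons_val_one, Matrix.head_cons, Matrix.vecHead, Matrix.vecTail]
      ring

    -- LOWER BOUND: exp (2γt) ≤ ρ - σ
    have hg1 : MonotoneOn (fun τ => Real.exp (-(2 * γ * τ)) * (ρf τ - σf τ)) (Set.Ici 0) := by
      apply monoHelper (g' := fun t => Real.exp (-(2 * γ * t)) * (4 * γ * σf t))
      · intro t ht
        have hexp : HasDerivAt (fun τ : ℝ => Real.exp (-(2 * γ * τ)))
            (Real.exp (-(2 * γ * t)) * (-(2 * γ))) t := by
          have h1 : HasDerivAt (fun τ : ℝ => -(2 * γ * τ)) (-(2 * γ)) t := by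
            simpa using ((hasDerivAt_id t).const_mul (2 * γ)).fun_neg
          simpa using h1.exp
        have D := (hexp.hasDerivWithinAt).mul (hrd t ht)
        refine D.congr_deriv (Eq.symm ?_)
        ring
      · intro t ht
        have h1 := Real.exp_pos (-(2 * γ * t))
        have h2 := hσnn t
        exact mul_nonneg h1.le (by nlinarith)
    have hrlow : ∀ t ∈ Set.Ici (0:ℝ), Real.exp (2 * γ * t) ≤ ρf t - σf t := by
      intro t ht
      have h01 := hg1 Set.self_mem_Ici ht ht
      have hv0 : ρf 0 - σf 0 = 1 := by
        simp [hρf, hσf, hu0]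
      simp only [mul_zero, neg_zero, Real.exp_zero, one_mul, hv0] at h01
      have hX : Real.exp (-(2 * γ * t)) = (Real.exp (2 * γ * t))⁻¹ := Real.exp_neg _
      rw [hX] at h01
      have hXpos := Real.exp_pos (2 * γ * t)
      have h02 := mul_le_mul_of_nonneg_left h01 hXpos.le
      rw [← mul_assoc, mul_inv_cancel₀ (ne_of_gt hXpos), one_mul, mul_one] at h02
      linarith
    -- UPPER BOUND
    set C' : ℝ := a ^ 2 * (1 + ε * k) / Γ with hC'
    have hC'pos : 0 < C' := by rw [hC']; positivity
    set Hf : ℝ → ℝ := fun t => C' * (1 - Real.exp (-2 * Γ * t)) with hHf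
    have hHd : ∀ t : ℝ, HasDerivAt Hf (E t * (1 + ε * k) / 2) t := by
      intro t
      have h1 : HasDerivAt (fun τ : ℝ => -2 * Γ * τ) (-2 * Γ) t := by
        simpa using (hasDerivAt_id t).const_mul (-2 * Γ)
      have h2 := h1.exp
      have h3 := ((hasDerivAt_const t (1:ℝ)).sub h2).const_mul C'
      refine h3.congr_deriv (Eq.symm ?_)
      rw [hE, hC']
      field_simp
      ring
    have hHle : ∀ t ∈ Set.Ici (0:ℝ), Hf t ≤ C' := by
      intro t ht
      simp only [hHf]
      nlinarith [Real.exp_pos (-2 * Γ * t), hC'pos]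
    have hH0 : Hf 0 = 0 := by simp [hHf]
    have hg2 : AntitoneOn (fun τ => Real.exp (-(2 * γ * τ + 2 * Hf τ)) * (ρf τ + σf τ))
        (Set.Ici 0) := by
      apply antiHelper (g' := fun t => Real.exp (-(2 * γ * t + 2 * Hf t)) *
        ((2 * γ * (ρf t - σf t)
          + 2 * E t * (1 + ε * k) * (u t 0 * u t 3 + u t 1 * u t 2))
          - (2 * γ + E t * (1 + ε * k)) * (ρf t + σf t)))
      · intro t ht
        have hin : HasDerivAt (fun τ : ℝ => -(2 * γ * τ + 2 * Hf τ))
            (-(2 * γ + 2 * (E t * (1 + ε * k) / 2))) t := by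
          have h1 : HasDerivAt (fun τ : ℝ => 2 * γ * τ) (2 * γ) t := by
            simpa using (hasDerivAt_id t).const_mul (2 * γ)
          exact (h1.add ((hHd t).const_mul 2)).neg
        have hexp := hin.exp
        have D := (hexp.hasDerivWithinAt).mul (hsd t ht)
        refine D.congr_deriv (Eq.symm ?_)
        ring
      · intro t ht
        apply mul_nonpos_of_nonneg_of_nonpos (Real.exp_pos _).le
        have h1k : (0:ℝ) < 1 + ε * k := by nlinarith
        have hc1 : 0 ≤ E t * (1 + ε * k) := mul_nonneg (hEpos t) h1k.le
        simp only [hρf, hσf]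
        nlinarith [mul_nonneg hc1 (sq_nonneg (u t 0 - u t 3)),
          mul_nonneg hc1 (sq_nonneg (u t 1 - u t 2)),
          mul_nonneg hγpos.le (hσnn t), hσnn 0]
    have hsup : ∀ t ∈ Set.Ici (0:ℝ), ρf t + σf t ≤ Real.exp (2 * γ * t + 2 * C') := by
      intro t ht
      have h01 := hg2 Set.self_mem_Ici ht ht
      have hv0 : ρf 0 + σf 0 = 1 := by simp [hρf, hσf, hu0]
      simp only [mul_zero, neg_zero, Real.exp_zero, one_mul, hv0, hH0, add_zero,
        zero_add] at h01
      -- h01 : exp (-(2γt + 2 Hf t)) * (s t) ≤ 1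
      have hX : Real.exp (-(2 * γ * t + 2 * Hf t))
          = (Real.exp (2 * γ * t + 2 * Hf t))⁻¹ := Real.exp_neg _
      have hXpos := Real.exp_pos (2 * γ * t + 2 * Hf t)
      have hs1 : ρf t + σf t ≤ Real.exp (2 * γ * t + 2 * Hf t) := by
        have h02 := mul_le_mul_of_nonneg_left h01 hXpos.le
        rw [hX, ← mul_assoc, mul_inv_cancel₀ (ne_of_gt hXpos), one_mul, mul_one] at h02
        exact h02
      refine le_trans hs1 (Real.exp_le_exp.mpr ?_)
      have := hHle t ht
      linarith
    -- Norm bounds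
    have hnorm_low : ∀ t ∈ Set.Ici (0:ℝ), Real.exp (γ * t) ≤ 2 * ‖u t‖ := by
      intro t ht
      have hr := hrlow t ht
      have hb0 : |u t 0| ≤ ‖u t‖ := by
        have := norm_le_pi_norm (u t) 0; rwa [Real.norm_eq_abs] at this
      have hb1 : |u t 1| ≤ ‖u t‖ := by
        have := norm_le_pi_norm (u t) 1; rwa [Real.norm_eq_abs] at this
      have hb2 : |u t 2| ≤ ‖u t‖ := by
        have := norm_le_pi_norm (u t) 2; rwa [Real.norm_eq_abs] at this
      have hb3 : |u t 3| ≤ ‖u t‖ := by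
        have := norm_le_pi_norm (u t) 3; rwa [Real.norm_eq_abs] at this
      have hs4 : ρf t + σf t ≤ 4 * ‖u t‖ * ‖u t‖ := by
        simp only [hρf, hσf]
        nlinarith [abs_nonneg (u t 0), abs_nonneg (u t 1), abs_nonneg (u t 2),
          abs_nonneg (u t 3), abs_mul_abs_self (u t 0), abs_mul_abs_self (u t 1),
          abs_mul_abs_self (u t 2), abs_mul_abs_self (u t 3), norm_nonneg (u t)]
      have hee : Real.exp (γ * t) * Real.exp (γ * t) = Real.exp (2 * γ * t) := by
        rw [← Real.exp_add]; ring_nf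
      nlinarith [Real.exp_pos (γ * t), norm_nonneg (u t), hσnn t, hρnn t]
    have hnorm_up : ∀ t ∈ Set.Ici (0:ℝ), ‖u t‖ ≤ Real.exp (γ * t + C') := by
      intro t ht
      have hs := hsup t ht
      rw [pi_norm_le_iff_of_nonneg (Real.exp_pos _).le]
      intro i
      rw [Real.norm_eq_abs]
      have hq0 := mul_self_nonneg (u t 0)
      have hq1 := mul_self_nonneg (u t 1)
      have hq2 := mul_self_nonneg (u t 2)
      have hq3 := mul_self_nonneg (u t 3)
      have hcomp2 : u t i * u t i ≤ ρf t + σf t := by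
        fin_cases i
        · show u t 0 * u t 0 ≤ ρf t + σf t
          simp only [hρf, hσf]; nlinarith
        · show u t 1 * u t 1 ≤ ρf t + σf t
          simp only [hρf, hσf]; nlinarith
        · show u t 2 * u t 2 ≤ ρf t + σf t
          simp only [hρf, hσf]; nlinarith
        · show u t 3 * u t 3 ≤ ρf t + σf t
          simp only [hρf, hσf]; nlinarith
      have hee : Real.exp (γ * t + C') * Real.exp (γ * t + C')
          = Real.exp (2 * γ * t + 2 * C') := by
        rw [← Real.exp_add]; ring_nf
      nlinarith [Real.exp_pos (γ * t + C'), abs_nonneg (u t i),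
        abs_mul_abs_self (u t i)]
    -- Squeeze
    have hν : ∀ t ∈ Set.Ici (1:ℝ), 0 < ‖u t‖ := by
      intro t ht
      have := hnorm_low t (Set.mem_Ici.mpr (le_trans zero_le_one ht))
      nlinarith [Real.exp_pos (γ * t)]
    apply tendsto_of_tendsto_of_tendsto_of_le_of_le'
      (g := fun t : ℝ => γ + (-Real.log 2) / t) (h := fun t : ℝ => γ + C' / t)
    · exact tendAux γ (-Real.log 2)
    · exact tendAux γ C'
    · filter_upwards [Filter.eventually_ge_atTop (1:ℝ)] with t ht
      have htpos : (0:ℝ) < t := lt_of_lt_of_le zero_lt_one ht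
      have hlow := hnorm_low t (Set.mem_Ici.mpr (le_trans zero_le_one ht))
      have hlog : γ * t - Real.log 2 ≤ Real.log ‖u t‖ := by
        have h2 : Real.exp (γ * t) / 2 ≤ ‖u t‖ := by linarith
        have hpos : (0:ℝ) < Real.exp (γ * t) / 2 := by positivity
        have := (Real.log_le_log_iff hpos (hν t ht)).mpr h2
        rwa [Real.log_div (Real.exp_ne_zero _) two_ne_zero, Real.log_exp] at this
      have : γ + -Real.log 2 / t = (γ * t - Real.log 2) / t := by
        field_simp
        ring
      rw [this, div_le_div_iff₀ htpos htpos]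
      nlinarith [hlog, htpos]
    · filter_upwards [Filter.eventually_ge_atTop (1:ℝ)] with t ht
      have htpos : (0:ℝ) < t := lt_of_lt_of_le zero_lt_one ht
      have hup := hnorm_up t (Set.mem_Ici.mpr (le_trans zero_le_one ht))
      have hlog : Real.log ‖u t‖ ≤ γ * t + C' := by
        have := (Real.log_le_log_iff (hν t ht) (Real.exp_pos _)).mpr hup
        rwa [Real.log_exp] at this
      have : γ + C' / t = (γ * t + C') / t := by field_simp
      rw [this, div_le_div_iff₀ htpos htpos]
      nlinarith [hlog, htpos]
end

section
/- Fix real parameters a > 0, Γ > 0, ε > 0, k > 0 and set γ = 2εkΓ. Let E(t) = 4a²·exp(−2Γt) and let M, N be the 4×4 real matrices M = [[−γ, k²(εk−2)/2, 0, 0], [−k²(εk−2)/2, −γ, 0, 0], [0, 0, γ, −k²(2+εk)/2], [0, 0, k²(2+εk)/2, γ]] and N = (1/2)·[[0, 1+5εk, 0, 1+εk], [−(1+5εk), 0, 1+εk, 0], [0, 1+εk, 0, 1−3εk], [1+εk, 0, −(1−3εk), 0]]. Consider differentiable u : [0,∞) → ℝ⁴ with u'(t) = (M + E(t)N)·u(t).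 Then: (i) if 2εk < 1, every such solution satisfies e^(−Γt)·‖u(t)‖ → 0 as t → ∞; (ii) if 2εk > 1, there exists such a solution, not identically zero, with lim_{t→∞} (log(e^(−Γt)‖u(t)‖))/t = Γ(2εk − 1) > 0, so that e^(−Γt)‖u(t)‖ → ∞. -/
open Set Filter Topology
set_option maxHeartbeats 1000000

section existence
variable {Ev : Type*} [NormedAddCommGroup Ev] [NormedSpace ℝ Ev] [CompleteSpace Ev]

lemma glue_sol (v : ℝ → Ev → Ev) {b c : ℝ} (hab : 0 ≤ b) (hbc : b ≤ c) (f g : ℝ → Ev)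
    (hf : ∀ t ∈ Icc (0:ℝ) b, HasDerivWithinAt f (v t (f t)) (Icc 0 b) t)
    (hg : ∀ t ∈ Icc b c, HasDerivWithinAt g (v t (g t)) (Icc b c) t)
    (hfg : f b = g b) :
    ∀ t ∈ Icc (0:ℝ) c, HasDerivWithinAt (fun τ => if τ ≤ b then f τ else g τ)
      (v t (if t ≤ b then f t else g t)) (Icc 0 c) t := by
  set F : ℝ → Ev := fun τ => if τ ≤ b then f τ else g τ with hF
  have hF1 : ∀ τ ∈ Icc (0:ℝ) b, F τ = f τ := fun τ hτ => if_pos hτ.2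
  have hF2 : ∀ τ ∈ Icc b c, F τ = g τ := by
    intro τ hτ
    by_cases h : τ ≤ b
    · have : τ = b := le_antisymm h hτ.1
      simp [hF, this, hfg]
    · simp [hF, h]
  intro t ht
  have hgoal : HasDerivWithinAt F (v t (F t)) (Icc 0 c) t := by
    have h1 : HasDerivWithinAt F (v t (F t)) (Icc 0 b) t := by
      by_cases h : t ≤ b
      · have htm : t ∈ Icc (0:ℝ) b := ⟨ht.1, h⟩
        have h2 := (hf t htm).congr hF1 (hF1 t htm)
        simpa only [hF1 t htm] using h2
      · exact HasFDerivWithinAt.of_notMem_closure (by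
          rw [closure_Icc]; exact fun hc => h hc.2)
    have h2 : HasDerivWithinAt F (v t (F t)) (Icc b c) t := by
      by_cases h : b ≤ t
      · have htm : t ∈ Icc b c := ⟨h, ht.2⟩
        have h2 := (hg t htm).congr hF2 (hF2 t htm)
        simpa only [hF2 t htm] using h2
      · exact HasFDerivWithinAt.of_notMem_closure (by
          rw [closure_Icc]; exact fun hc => h hc.1)
    have := h1.union h2
    rwa [Icc_union_Icc_eq_Icc hab hbc] at this
  exact hgoal

lemma exists_global_sol (v : ℝ → Ev → Ev) (K : NNReal)
    (hlip : ∀ t, LipschitzWith K (v t)) (h0 : ∀ t, v t 0 = 0)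
    (hcont : ∀ x, Continuous fun t => v t x) (x₀ : Ev) :
    ∃ u : ℝ → Ev, u 0 = x₀ ∧ ∀ t ≥ (0:ℝ), HasDerivWithinAt u (v t (u t)) (Ici 0) t := by
  set K' : ℝ := (K : ℝ) + 1 with hK'
  have hK'0 : 0 < K' := by positivity
  set h : ℝ := 1 / (2 * K') with hh
  have hh0 : 0 < h := by positivity
  have hvb : ∀ t x, ‖v t x‖ ≤ K * ‖x‖ := by
    intro t x
    have := (hlip t).dist_le_mul x 0
    simpa [h0 t, dist_eq_norm] using this
  have hstep : ∀ s : ℝ, ∀ y : Ev, ∃ f : ℝ → Ev, f s = y ∧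
      ∀ t ∈ Icc s (s + h), HasDerivWithinAt f (v t (f t)) (Icc s (s + h)) t := by
    intro s y
    have hpl : IsPicardLindelof v (tmin := s) (tmax := s + h) ⟨s, le_refl s, by linarith⟩ y
        ⟨‖y‖ + 1, by positivity⟩ 0 ⟨K' * (2 * ‖y‖ + 1), by positivity⟩ K := by
      refine ⟨fun t _ => (hlip t).lipschitzOnWith,
        fun x _ => (hcont x).continuousOn, ?_, ?_⟩
      · intro t _ x hx
        have hxn : ‖x‖ ≤ 2 * ‖y‖ + 1 := by
          have h1 : ‖x - y‖ ≤ ‖y‖ + 1 := mem_closedBall_iff_norm.1 hx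
          have h2 : ‖x‖ ≤ ‖y‖ + ‖x - y‖ := norm_le_insert' x y
          linarith
        calc ‖v t x‖ ≤ K * ‖x‖ := hvb t x
          _ ≤ K' * (2 * ‖y‖ + 1) := by
              have hK : (K:ℝ) ≤ K' := by simp [hK']
              have hK0 : (0:ℝ) ≤ (K:ℝ) := K.2
              nlinarith [norm_nonneg x]
      · show K' * (2 * ‖y‖ + 1) * max (s + h - s) (s - s) ≤ ((‖y‖ + 1 : ℝ) : ℝ) - 0
        rw [sub_zero]
        have hmax : max (s + h - s) (s - s) = h := by
          rw [max_eq_left (by linarith)]; ring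
        rw [hmax]
        have he : K' * (2 * ‖y‖ + 1) * h = (2 * ‖y‖ + 1) / 2 := by
          rw [hh]; field_simp
        rw [he]; linarith [norm_nonneg y]
    obtain ⟨f, hf0, hfd⟩ := hpl.exists_eq_forall_mem_Icc_hasDerivWithinAt₀
    exact ⟨f, hf0, hfd⟩
  have hsol : ∀ n : ℕ, ∃ f : ℝ → Ev, f 0 = x₀ ∧
      ∀ t ∈ Icc (0:ℝ) ((n + 1) * h), HasDerivWithinAt f (v t (f t)) (Icc 0 ((n + 1) * h)) t := by
    intro n
    induction n with
    | zero =>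
      obtain ⟨f, hf0, hfd⟩ := hstep 0 x₀
      refine ⟨f, hf0, ?_⟩
      rw [show (((0:ℕ):ℝ) + 1) * h = 0 + h by push_cast; ring]
      exact hfd
    | succ n ih =>
      obtain ⟨f, hf0, hfd⟩ := ih
      obtain ⟨g, hg0, hgd⟩ := hstep ((n + 1) * h) (f ((n + 1) * h))
      have hb0 : (0:ℝ) ≤ ((n:ℝ) + 1) * h := by positivity
      have hbc : ((n:ℝ) + 1) * h ≤ ((n:ℝ) + 1 + 1) * h := by nlinarith
      have hgd' : ∀ t ∈ Icc (((n:ℝ)+1)*h) (((n:ℝ)+1+1)*h),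
          HasDerivWithinAt g (v t (g t)) (Icc (((n:ℝ)+1)*h) (((n:ℝ)+1+1)*h)) t := by
        rw [show ((n:ℝ) + 1 + 1) * h = ((n:ℝ) + 1) * h + h by ring]
        exact hgd
      have hglue := glue_sol v hb0 hbc f g hfd hgd' hg0.symm
      refine ⟨fun τ => if τ ≤ ((n:ℝ)+1)*h then f τ else g τ, by simp [hb0, hf0], ?_⟩
      intro t ht
      rw [show (((n+1:ℕ):ℝ) + 1) * h = ((n:ℝ) + 1 + 1) * h by push_cast; ring] at ht ⊢
      exact hglue t ht
  choose f hf0 hfd using hsol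
  have huniq : ∀ m n : ℕ, m ≤ n → ∀ t ∈ Icc (0:ℝ) ((m + 1) * h), f m t = f n t := by
    intro m n hmn
    have hmn' : ((m:ℝ) + 1) * h ≤ ((n:ℝ) + 1) * h := by
      have : (m:ℝ) + 1 ≤ (n:ℝ) + 1 := by exact_mod_cast by omega
      nlinarith
    have hsub : Icc (0:ℝ) ((m+1)*h) ⊆ Icc 0 ((n+1)*h) := Icc_subset_Icc le_rfl hmn'
    have hco : ∀ p : ℕ, ContinuousOn (f p) (Icc 0 ((p+1)*h)) :=
      fun p t ht => (hfd p t ht).continuousWithinAt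
    refine ODE_solution_unique_of_mem_Icc_right (K := K) (v := v) (s := fun _ => univ)
      (fun t _ => (hlip t).lipschitzOnWith) (hco m) ?_ (fun _ _ => mem_univ _)
      ((hco n).mono hsub) ?_ (fun _ _ => mem_univ _) (by rw [hf0, hf0])
    · intro t ht
      refine (hfd m t ⟨ht.1, ht.2.le⟩).mono_of_mem_nhdsWithin ?_
      have hss : Ici t ∩ Iio (((m:ℝ)+1)*h) ⊆ Icc 0 ((m+1)*h) :=
        fun z hz => ⟨le_trans ht.1 hz.1, hz.2.le⟩
      exact mem_nhdsWithin.2 ⟨Iio (((m:ℝ)+1)*h), isOpen_Iio, ht.2,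
        fun z hz => hss ⟨hz.2, hz.1⟩⟩
    · intro t ht
      have htn : t ∈ Icc (0:ℝ) ((n+1)*h) := hsub ⟨ht.1, ht.2.le⟩
      refine (hfd n t htn).mono_of_mem_nhdsWithin ?_
      have hlt : t < ((n:ℝ)+1)*h := lt_of_lt_of_le ht.2 hmn'
      have hss : Ici t ∩ Iio (((n:ℝ)+1)*h) ⊆ Icc 0 ((n+1)*h) :=
        fun z hz => ⟨le_trans ht.1 hz.1, hz.2.le⟩
      exact mem_nhdsWithin.2 ⟨Iio (((n:ℝ)+1)*h), isOpen_Iio, hlt,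
        fun z hz => hss ⟨hz.2, hz.1⟩⟩
  refine ⟨fun t => f ⌊t / h⌋₊ t, by simpa using hf0 0, ?_⟩
  intro t ht
  set n := ⌊t / h⌋₊ with hn
  have htlt : t < ((n:ℝ) + 1) * h := by
    have := Nat.lt_floor_add_one (t / h)
    rw [div_lt_iff₀ hh0] at this
    push_cast at this ⊢
    linarith
  have hagree : ∀ z, 0 ≤ z → z < ((n:ℝ)+1) * h → f ⌊z / h⌋₊ z = f n z := by
    intro z hz hzlt
    have hzh : z / h < (n:ℝ) + 1 := by rw [div_lt_iff₀ hh0]; linarith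
    have hm : ⌊z / h⌋₊ ≤ n := by
      have := (Nat.floor_lt (by positivity : (0:ℝ) ≤ z / h)).2
        (by push_cast; exact hzh : z / h < ((n+1 : ℕ) : ℝ))
      omega
    have hle : z ≤ ((⌊z / h⌋₊ : ℝ) + 1) * h := by
      have := Nat.lt_floor_add_one (z / h)
      rw [div_lt_iff₀ hh0] at this
      linarith
    exact huniq _ n hm z ⟨hz, hle⟩
  have h1 : HasDerivWithinAt (f n) (v t (f n t)) (Ici 0) t := by
    refine (hfd n t ⟨ht, htlt.le⟩).mono_of_mem_nhdsWithin ?_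
    have hss : Ici (0:ℝ) ∩ Iio (((n:ℝ)+1)*h) ⊆ Icc 0 ((n+1)*h) :=
      fun z hz => ⟨hz.1, hz.2.le⟩
    exact mem_nhdsWithin.2 ⟨Iio (((n:ℝ)+1)*h), isOpen_Iio, htlt,
      fun z hz => hss ⟨hz.2, hz.1⟩⟩
  have heq : (fun z => f ⌊z / h⌋₊ z) =ᶠ[𝓝[Ici 0] t] f n := by
    have hmem : Ici (0:ℝ) ∩ Iio (((n:ℝ)+1)*h) ∈ 𝓝[Ici 0] t :=
      inter_mem_nhdsWithin _ (Iio_mem_nhds htlt)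
    filter_upwards [hmem] with z hz
    exact hagree z hz.1 hz.2
  have hut : f ⌊t / h⌋₊ t = f n t := hagree t ht htlt
  have := h1.congr_of_eventuallyEq heq hut
  simpa only [hut] using this
end existence


lemma pi4_norm_le_sqrt (z : Fin 4 → ℝ) :
    ‖z‖ ≤ Real.sqrt ((z 0 * z 0 + z 1 * z 1) + (z 2 * z 2 + z 3 * z 3)) := by
  rw [pi_norm_le_iff_of_nonneg (Real.sqrt_nonneg _)]
  intro i
  rw [Real.norm_eq_abs, ← Real.sqrt_mul_self_eq_abs]
  apply Real.sqrt_le_sqrt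
  have hb : ∀ j : Fin 4, z j * z j ≤ (z 0 * z 0 + z 1 * z 1) + (z 2 * z 2 + z 3 * z 3) := by
    intro j
    fin_cases j
    · show z 0 * z 0 ≤ _
      nlinarith [sq_nonneg (z 1), sq_nonneg (z 2), sq_nonneg (z 3)]
    · show z 1 * z 1 ≤ _
      nlinarith [sq_nonneg (z 0), sq_nonneg (z 2), sq_nonneg (z 3)]
    · show z 2 * z 2 ≤ _
      nlinarith [sq_nonneg (z 0), sq_nonneg (z 1), sq_nonneg (z 3)]
    · show z 3 * z 3 ≤ _
      nlinarith [sq_nonneg (z 0), sq_nonneg (z 1), sq_nonneg (z 2)]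
  exact hb i

lemma mulVec_norm_le4 (A : Matrix (Fin 4) (Fin 4) ℝ) (z : Fin 4 → ℝ) :
    ‖A.mulVec z‖ ≤ (∑ i, ∑ j, |A i j|) * ‖z‖ := by
  have hz : ∀ j, |z j| ≤ ‖z‖ := fun j => by
    simpa [Real.norm_eq_abs] using norm_le_pi_norm z j
  rw [pi_norm_le_iff_of_nonneg (by positivity)]
  intro i
  rw [Real.norm_eq_abs]
  calc |A.mulVec z i| = |∑ j, A i j * z j| := by rw [Matrix.mulVec, dotProduct]
    _ ≤ ∑ j, |A i j * z j| := Finset.abs_sum_le_sum_abs _ _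
    _ ≤ ∑ j, |A i j| * ‖z‖ := Finset.sum_le_sum (fun j _ => by
        rw [abs_mul]; exact mul_le_mul_of_nonneg_left (hz j) (abs_nonneg _))
    _ = (∑ j, |A i j|) * ‖z‖ := by rw [Finset.sum_mul]
    _ ≤ (∑ i, ∑ j, |A i j|) * ‖z‖ := by
        refine mul_le_mul_of_nonneg_right ?_ (norm_nonneg z)
        exact Finset.single_le_sum (f := fun i => ∑ j, |A i j|)
          (fun i _ => by positivity) (Finset.mem_univ i)


lemma stokes_bounds (a Γ ε k : ℝ) (ha : 0 < a) (hΓ : 0 < Γ) (hε : 0 < ε) (hk : 0 < k)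
    (γ : ℝ) (hγ : γ = 2 * ε * k * Γ)
    (E : ℝ → ℝ) (hE : ∀ t, E t = 4 * a ^ 2 * Real.exp (-2 * Γ * t))
    (M N : Matrix (Fin 4) (Fin 4) ℝ)
    (hM : M = !![-γ, k ^ 2 * (ε * k - 2) / 2, 0, 0;
                 -(k ^ 2 * (ε * k - 2) / 2), -γ, 0, 0;
                 0, 0, γ, -(k ^ 2 * (2 + ε * k) / 2);
                 0, 0, k ^ 2 * (2 + ε * k) / 2, γ])
    (hN : N = (1 / 2 : ℝ) • !![0, 1 + 5 * ε * k, 0, 1 + ε * k;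
                               -(1 + 5 * ε * k), 0, 1 + ε * k, 0;
                               0, 1 + ε * k, 0, 1 - 3 * ε * k;
                               1 + ε * k, 0, -(1 - 3 * ε * k), 0])
    (u : ℝ → Fin 4 → ℝ)
    (hu : ∀ t ≥ (0 : ℝ), HasDerivWithinAt u ((M + E t • N).mulVec (u t)) (Set.Ici 0) t) :
    ∀ t ≥ (0:ℝ),
      (((u t 0)*(u t 0) + (u t 1)*(u t 1)) + ((u t 2)*(u t 2) + (u t 3)*(u t 3)) ≤
        ((((u 0 0)*(u 0 0) + (u 0 1)*(u 0 1)) + ((u 0 2)*(u 0 2) + (u 0 3)*(u 0 3))) *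
          Real.exp (2*a^2*(1+ε*k)/Γ)) * Real.exp (2*γ*t))
      ∧ (((u 0 2)*(u 0 2) + (u 0 3)*(u 0 3)) - ((u 0 0)*(u 0 0) + (u 0 1)*(u 0 1)) ≤
        (((u t 2)*(u t 2) + (u t 3)*(u t 3)) - ((u t 0)*(u t 0) + (u t 1)*(u t 1))) *
          Real.exp (-(2*γ*t))) := by
  have hγ0 : 0 ≤ γ := by rw [hγ]; positivity
  have hm0 : (0:ℝ) ≤ 1 + ε*k := by positivity
  set c₀ : ℝ := 2*a^2*(1+ε*k)/Γ with hc₀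
  have hc₀0 : 0 ≤ c₀ := by positivity
  -- component values of the vector field
  have hWW : ∀ x : ℝ, ∀ z : Fin 4 → ℝ,
      (M + E x • N).mulVec z 0 = -γ*z 0 + k^2*(ε*k-2)/2*z 1
          + E x/2*((1+5*ε*k)*z 1 + (1+ε*k)*z 3) ∧
      (M + E x • N).mulVec z 1 = -(k^2*(ε*k-2)/2)*z 0 - γ*z 1
          + E x/2*(-(1+5*ε*k)*z 0 + (1+ε*k)*z 2) ∧
      (M + E x • N).mulVec z 2 = γ*z 2 - k^2*(2+ε*k)/2*z 3
          + E x/2*((1+ε*k)*z 1 + (1-3*ε*k)*z 3) ∧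
      (M + E x • N).mulVec z 3 = k^2*(2+ε*k)/2*z 2 + γ*z 3
          + E x/2*((1+ε*k)*z 0 - (1-3*ε*k)*z 2) := by
    subst hM hN
    intro x z
    refine ⟨?_, ?_, ?_, ?_⟩ <;>
      · simp [Matrix.mulVec, dotProduct, Fin.sum_univ_four]
        ring
  set S : ℝ → ℝ := fun τ =>
    ((u τ 0)*(u τ 0) + (u τ 1)*(u τ 1)) + ((u τ 2)*(u τ 2) + (u τ 3)*(u τ 3)) with hSdef
  set V : ℝ → ℝ := fun τ =>
    ((u τ 2)*(u τ 2) + (u τ 3)*(u τ 3)) - ((u τ 0)*(u τ 0) + (u τ 1)*(u τ 1)) with hVdef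
  -- continuity of components on Ici 0
  have hcw : ∀ i : Fin 4, ContinuousOn (fun τ => u τ i) (Ici 0) := by
    intro i t ht
    exact ((continuous_apply i).continuousAt.comp_continuousWithinAt (hu t ht).continuousWithinAt)
  have hcS : ContinuousOn S (Ici 0) :=
    (((hcw 0).mul (hcw 0)).add ((hcw 1).mul (hcw 1))).add
      (((hcw 2).mul (hcw 2)).add ((hcw 3).mul (hcw 3)))
  have hcV : ContinuousOn V (Ici 0) :=
    (((hcw 2).mul (hcw 2)).add ((hcw 3).mul (hcw 3))).sub
      (((hcw 0).mul (hcw 0)).add ((hcw 1).mul (hcw 1)))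
  have hE0 : ∀ x : ℝ, 0 ≤ E x := fun x => by rw [hE]; positivity
  -- derivatives at interior points
  have hDS : ∀ x : ℝ, 0 < x →
      HasDerivAt S (2*γ*(((u x 2)*(u x 2) + (u x 3)*(u x 3))
        - ((u x 0)*(u x 0) + (u x 1)*(u x 1)))
        + 2*(E x)*(1+ε*k)*((u x 0)*(u x 3) + (u x 2)*(u x 1))) x ∧
      HasDerivAt V (2*γ*(S x)) x := by
    intro x hx
    have hvec := (hu x hx.le).hasDerivAt (Ici_mem_nhds hx)
    have hcomp := hasDerivAt_pi.1 hvec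
    obtain ⟨hw0, hw1, hw2, hw3⟩ := hWW x (u x)
    have h0 := hcomp 0; have h1 := hcomp 1; have h2 := hcomp 2; have h3 := hcomp 3
    rw [hw0] at h0; rw [hw1] at h1; rw [hw2] at h2; rw [hw3] at h3
    constructor
    · have := (((h0.mul h0).add (h1.mul h1)).add ((h2.mul h2).add (h3.mul h3)))
      exact this.congr_deriv (by ring)
    · have := ((h2.mul h2).add (h3.mul h3)).sub ((h0.mul h0).add (h1.mul h1))
      exact this.congr_deriv (by ring)
  -- the two monotone quantities
  intro t ht
  constructor
  · -- upper bound via antitone G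
    set φ : ℝ → ℝ := fun τ => 2*γ*τ + c₀*(1 - Real.exp (-2*Γ*τ)) with hφdef
    have hφd : ∀ x : ℝ, HasDerivAt φ (2*γ + E x*(1+ε*k)) x := by
      intro x
      have h1 : HasDerivAt (fun τ : ℝ => 2*γ*τ) (2*γ) x := by
        simpa using (hasDerivAt_id x).const_mul (2*γ)
      have h2 : HasDerivAt (fun τ : ℝ => -2*Γ*τ) (-2*Γ) x := by
        simpa using (hasDerivAt_id x).const_mul (-2*Γ)
      have h3 : HasDerivAt (fun τ : ℝ => Real.exp (-2*Γ*τ)) (Real.exp (-2*Γ*x)*(-2*Γ)) x :=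
        h2.exp
      have h4 : HasDerivAt (fun τ : ℝ => c₀*(1 - Real.exp (-2*Γ*τ)))
          (c₀*(0 - Real.exp (-2*Γ*x)*(-2*Γ))) x :=
        ((hasDerivAt_const x (1:ℝ)).sub h3).const_mul c₀
      have h5 := h1.add h4
      refine h5.congr_deriv ?_
      rw [hE, hc₀]
      field_simp
      ring
    have hG : AntitoneOn (fun τ => S τ * Real.exp (-φ τ)) (Ici 0) := by
      apply antitoneOn_of_deriv_nonpos (convex_Ici 0)
      · exact hcS.mul (Real.continuous_exp.comp (by fun_prop)).continuousOn
      · intro x hx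
        rw [interior_Ici] at hx
        exact (((hDS x hx).1.mul (((hφd x).neg).exp)).differentiableAt).differentiableWithinAt
      · intro x hx
        rw [interior_Ici] at hx
        have hd := ((hDS x hx).1.mul (((hφd x).neg).exp))
        rw [show deriv (fun τ => S τ * Real.exp (-φ τ)) x = _ from hd.deriv]
        have hex : 0 < Real.exp (-φ x) := Real.exp_pos _
        have hkey : 2*γ*(((u x 2)*(u x 2) + (u x 3)*(u x 3))
              - ((u x 0)*(u x 0) + (u x 1)*(u x 1)))
            + 2*(E x)*(1+ε*k)*((u x 0)*(u x 3) + (u x 2)*(u x 1))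
            ≤ (2*γ + E x*(1+ε*k)) *
              (((u x 0)*(u x 0) + (u x 1)*(u x 1)) + ((u x 2)*(u x 2) + (u x 3)*(u x 3))) := by
          have hEx := hE0 x
          nlinarith [sq_nonneg (u x 0 - u x 3), sq_nonneg (u x 1 - u x 2),
            mul_nonneg (mul_nonneg hEx hm0) (sq_nonneg (u x 0 - u x 3)),
            mul_nonneg (mul_nonneg hEx hm0) (sq_nonneg (u x 1 - u x 2)),
            mul_nonneg hγ0 (sq_nonneg (u x 0)), mul_nonneg hγ0 (sq_nonneg (u x 1))]
        simp only [hSdef, Pi.neg_apply]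
        nlinarith [mul_le_mul_of_nonneg_right hkey hex.le]
    have h1 := hG (self_mem_Ici) ht ht
    simp only at h1
    have hφ0 : φ 0 = 0 := by norm_num [hφdef]
    have hφt : φ t ≤ 2*γ*t + c₀ := by
      have hee : Real.exp (-2*Γ*t) ≥ 0 := (Real.exp_pos _).le
      simp only [hφdef]
      nlinarith
    have hS0 : 0 ≤ S 0 := by
      simp only [hSdef]
      nlinarith [sq_nonneg (u 0 0), sq_nonneg (u 0 1), sq_nonneg (u 0 2), sq_nonneg (u 0 3)]
    rw [hφ0, neg_zero, Real.exp_zero, mul_one] at h1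
    -- h1 : S t * exp (-φ t) ≤ S 0
    have h2 : S t ≤ S 0 * Real.exp (φ t) := by
      have := mul_le_mul_of_nonneg_right h1 (Real.exp_pos (φ t)).le
      rwa [mul_assoc, ← Real.exp_add, neg_add_cancel, Real.exp_zero, mul_one] at this
    show S t ≤ (S 0 * Real.exp c₀) * Real.exp (2*γ*t)
    calc S t ≤ S 0 * Real.exp (φ t) := h2
      _ ≤ S 0 * Real.exp (2*γ*t + c₀) := by
          exact mul_le_mul_of_nonneg_left (Real.exp_le_exp.2 hφt) hS0
      _ = (S 0 * Real.exp c₀) * Real.exp (2*γ*t) := by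
          rw [Real.exp_add]; ring
  · -- lower bound via monotone W
    have hW : MonotoneOn (fun τ => V τ * Real.exp (-(2*γ*τ))) (Ici 0) := by
      apply monotoneOn_of_deriv_nonneg (convex_Ici 0)
      · exact hcV.mul (Real.continuous_exp.comp (by fun_prop)).continuousOn
      · intro x hx
        rw [interior_Ici] at hx
        have hed : HasDerivAt (fun τ : ℝ => Real.exp (-(2*γ*τ))) (Real.exp (-(2*γ*x))*(-(2*γ))) x := by
          have : HasDerivAt (fun τ : ℝ => -(2*γ*τ)) (-(2*γ)) x := by
            exact (((hasDerivAt_id x).const_mul (2*γ)).neg).congr_deriv (by ring)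
          exact this.exp
        exact (((hDS x hx).2.mul hed).differentiableAt).differentiableWithinAt
      · intro x hx
        rw [interior_Ici] at hx
        have hed : HasDerivAt (fun τ : ℝ => Real.exp (-(2*γ*τ))) (Real.exp (-(2*γ*x))*(-(2*γ))) x := by
          have : HasDerivAt (fun τ : ℝ => -(2*γ*τ)) (-(2*γ)) x := by
            exact (((hasDerivAt_id x).const_mul (2*γ)).neg).congr_deriv (by ring)
          exact this.exp
        have hd := (hDS x hx).2.mul hed
        rw [show deriv (fun τ => V τ * Real.exp (-(2*γ*τ))) x = _ from hd.deriv]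
        have hex : 0 < Real.exp (-(2*γ*x)) := Real.exp_pos _
        have hSV : V x ≤ S x := by
          simp only [hSdef, hVdef]
          nlinarith [sq_nonneg (u x 0), sq_nonneg (u x 1)]
        have := mul_le_mul_of_nonneg_left hSV (mul_nonneg (by positivity : (0:ℝ) ≤ 2*γ) hex.le)
        nlinarith
    have h1 := hW (self_mem_Ici) ht ht
    simp only at h1
    rw [show -(2*γ*(0:ℝ)) = 0 by ring, Real.exp_zero, mul_one] at h1
    show V 0 ≤ V t * Real.exp (-(2*γ*t))
    exact h1


/-- Linear (in)stability of the damped Stokes wave under viscosity: with `γ = 2εkΓ`,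
(i) if `2εk < 1` then `e^{−Γt}‖u(t)‖ → 0` for every solution `u` of the linearized mode system
`u' = (M + E(t)N)u`; (ii) if `2εk > 1` there is a nontrivial solution with
`log(e^{−Γt}‖u(t)‖)/t → Γ(2εk − 1) > 0`, so that `e^{−Γt}‖u(t)‖ → ∞`. -/
theorem stmt_5 (a Γ ε k : ℝ) (ha : 0 < a) (hΓ : 0 < Γ) (hε : 0 < ε) (hk : 0 < k)
    (γ : ℝ) (hγ : γ = 2 * ε * k * Γ)
    (E : ℝ → ℝ) (hE : ∀ t, E t = 4 * a ^ 2 * Real.exp (-2 * Γ * t))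
    (M N : Matrix (Fin 4) (Fin 4) ℝ)
    (hM : M = !![-γ, k ^ 2 * (ε * k - 2) / 2, 0, 0;
                 -(k ^ 2 * (ε * k - 2) / 2), -γ, 0, 0;
                 0, 0, γ, -(k ^ 2 * (2 + ε * k) / 2);
                 0, 0, k ^ 2 * (2 + ε * k) / 2, γ])
    (hN : N = (1 / 2 : ℝ) • !![0, 1 + 5 * ε * k, 0, 1 + ε * k;
                               -(1 + 5 * ε * k), 0, 1 + ε * k, 0;
                               0, 1 + ε * k, 0, 1 - 3 * ε * k;
                               1 + ε * k, 0, -(1 - 3 * ε * k), 0]) :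
    (2 * ε * k < 1 →
      ∀ u : ℝ → Fin 4 → ℝ,
        (∀ t ≥ (0 : ℝ), HasDerivWithinAt u ((M + E t • N).mulVec (u t)) (Set.Ici 0) t) →
        Filter.Tendsto (fun t : ℝ => Real.exp (-Γ * t) * ‖u t‖) Filter.atTop (nhds 0)) ∧
    (1 < 2 * ε * k →
      ∃ u : ℝ → Fin 4 → ℝ,
        (∀ t ≥ (0 : ℝ), HasDerivWithinAt u ((M + E t • N).mulVec (u t)) (Set.Ici 0) t) ∧
        (¬ ∀ t ≥ (0 : ℝ), u t = 0) ∧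
        Filter.Tendsto (fun t : ℝ => Real.log (Real.exp (-Γ * t) * ‖u t‖) / t)
          Filter.atTop (nhds (Γ * (2 * ε * k - 1)))) := by
  have hc₀0 : 0 ≤ 2*a^2*(1+ε*k)/Γ := by positivity
  constructor
  · -- part (i)
    intro hsm u hu
    have hb := stokes_bounds a Γ ε k ha hΓ hε hk γ hγ E hE M N hM hN u hu
    set S0 : ℝ := ((u 0 0)*(u 0 0) + (u 0 1)*(u 0 1)) + ((u 0 2)*(u 0 2) + (u 0 3)*(u 0 3))
      with hS0def
    have hS00 : 0 ≤ S0 := by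
      rw [hS0def]
      nlinarith [sq_nonneg (u 0 0), sq_nonneg (u 0 1), sq_nonneg (u 0 2), sq_nonneg (u 0 3)]
    set D : ℝ := Real.sqrt (S0 * Real.exp (2*a^2*(1+ε*k)/Γ)) with hDdef
    have hD0 : 0 ≤ D := Real.sqrt_nonneg _
    have hbound : ∀ t ≥ (0:ℝ), ‖u t‖ ≤ D * Real.exp (γ * t) := by
      intro t ht
      have h1 := (hb t ht).1
      have h2 : ‖u t‖ ≤ Real.sqrt (((u t 0)*(u t 0) + (u t 1)*(u t 1))
          + ((u t 2)*(u t 2) + (u t 3)*(u t 3))) := pi4_norm_le_sqrt (u t)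
      have h3 : Real.sqrt (((u t 0)*(u t 0) + (u t 1)*(u t 1))
            + ((u t 2)*(u t 2) + (u t 3)*(u t 3)))
          ≤ Real.sqrt ((S0 * Real.exp (2*a^2*(1+ε*k)/Γ)) * Real.exp (2*γ*t)) :=
        Real.sqrt_le_sqrt h1
      have h4 : Real.sqrt ((S0 * Real.exp (2*a^2*(1+ε*k)/Γ)) * Real.exp (2*γ*t))
          = D * Real.exp (γ * t) := by
        rw [Real.sqrt_mul (by positivity), hDdef,
          show 2*γ*t = γ*t + γ*t by ring, Real.exp_add,
          Real.sqrt_mul_self (Real.exp_nonneg _)]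
      rw [h4] at h3
      exact h2.trans h3
    have hneg : γ - Γ < 0 := by rw [hγ]; nlinarith
    have hto : Tendsto (fun t : ℝ => D * Real.exp ((γ - Γ) * t)) atTop (𝓝 0) := by
      have h1 : Tendsto (fun t : ℝ => (γ - Γ) * t) atTop atBot :=
        (tendsto_const_mul_atBot_of_neg hneg).2 tendsto_id
      have h2 := Real.tendsto_exp_atBot.comp h1
      simpa using h2.const_mul D
    refine squeeze_zero' ?_ ?_ hto
    · filter_upwards with t; positivity
    · filter_upwards [eventually_ge_atTop (0:ℝ)] with t ht
      have h1 := hbound t ht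
      have h2 : Real.exp (-Γ * t) * ‖u t‖ ≤ Real.exp (-Γ * t) * (D * Real.exp (γ * t)) :=
        mul_le_mul_of_nonneg_left h1 (Real.exp_pos _).le
      calc Real.exp (-Γ * t) * ‖u t‖ ≤ Real.exp (-Γ * t) * (D * Real.exp (γ * t)) := h2
        _ = D * Real.exp ((γ - Γ) * t) := by
            rw [show (γ - Γ) * t = -Γ * t + γ * t by ring, Real.exp_add]; ring
  · -- part (ii)
    intro hbig
    -- set up the (time-truncated) vector field and its Lipschitz bound
    set Kb : ℝ := ∑ i : Fin 4, ∑ j : Fin 4, (|M i j| + 4*a^2*|N i j|) with hKb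
    have hKb0 : 0 ≤ Kb :=
      Finset.sum_nonneg fun i _ => Finset.sum_nonneg fun j _ => by positivity
    set v : ℝ → (Fin 4 → ℝ) → (Fin 4 → ℝ) := fun t z => (M + E (max t 0) • N).mulVec z with hv
    have hEb : ∀ s : ℝ, 0 ≤ s → 0 ≤ E s ∧ E s ≤ 4*a^2 := by
      intro s hs
      rw [hE]
      refine ⟨by positivity, ?_⟩
      have h1 : Real.exp (-2*Γ*s) ≤ 1 := Real.exp_le_one_iff.2 (by nlinarith)
      nlinarith [sq_nonneg a]
    have hAsum : ∀ t : ℝ, (∑ i, ∑ j, |(M + E (max t 0) • N) i j|) ≤ Kb := by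
      intro t
      apply Finset.sum_le_sum; intro i _
      apply Finset.sum_le_sum; intro j _
      rw [Matrix.add_apply, Matrix.smul_apply, smul_eq_mul]
      obtain ⟨he0, he1⟩ := hEb (max t 0) (le_max_right t 0)
      calc |M i j + E (max t 0) * N i j| ≤ |M i j| + |E (max t 0) * N i j| := abs_add_le _ _
        _ = |M i j| + E (max t 0) * |N i j| := by rw [abs_mul, abs_of_nonneg he0]
        _ ≤ |M i j| + 4*a^2*|N i j| := by nlinarith [abs_nonneg (N i j)]
    have hlip : ∀ t, LipschitzWith Kb.toNNReal (v t) := by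
      intro t
      apply LipschitzWith.of_dist_le_mul
      intro x y
      rw [dist_eq_norm, dist_eq_norm]
      simp only [hv]
      rw [← Matrix.mulVec_sub]
      calc ‖(M + E (max t 0) • N).mulVec (x - y)‖
          ≤ (∑ i, ∑ j, |(M + E (max t 0) • N) i j|) * ‖x - y‖ := mulVec_norm_le4 _ _
        _ ≤ Kb * ‖x - y‖ := mul_le_mul_of_nonneg_right (hAsum t) (norm_nonneg _)
        _ = Kb.toNNReal * ‖x - y‖ := by rw [Real.coe_toNNReal _ hKb0]
    have h00 : ∀ t, v t 0 = 0 := fun t => Matrix.mulVec_zero _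
    have hcnt : ∀ x, Continuous fun t => v t x := by
      intro x
      have hfe : (fun t => v t x) = fun t => M.mulVec x + E (max t 0) • N.mulVec x := by
        funext t
        simp only [hv]
        rw [Matrix.add_mulVec, Matrix.smul_mulVec]
      rw [hfe]
      have hEc : Continuous fun t : ℝ => E (max t 0) := by
        have hEf : E = fun s => 4*a^2*Real.exp (-2*Γ*s) := funext hE
        rw [hEf]
        fun_prop
      exact continuous_const.add (hEc.smul continuous_const)
    obtain ⟨u, hu0, huv⟩ := exists_global_sol v Kb.toNNReal hlip h00 hcnt
      (fun i => if i = 2 then (1:ℝ) else 0)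
    have hu : ∀ t ≥ (0:ℝ), HasDerivWithinAt u ((M + E t • N).mulVec (u t)) (Set.Ici 0) t := by
      intro t ht
      have h1 := huv t ht
      simp only [hv] at h1
      rwa [max_eq_left ht] at h1
    refine ⟨u, hu, ?_, ?_⟩
    · -- nontrivial
      intro hz
      have h2 := congrFun (hz 0 le_rfl) 2
      rw [hu0] at h2
      norm_num at h2
    · -- the limit
      have hb := stokes_bounds a Γ ε k ha hΓ hε hk γ hγ E hE M N hM hN u hu
      have he0 : u 0 0 = 0 := by
        rw [hu0]; show (if (0 : Fin 4) = 2 then (1:ℝ) else 0) = 0; exact if_neg (by decide)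
      have he1 : u 0 1 = 0 := by
        rw [hu0]; show (if (1 : Fin 4) = 2 then (1:ℝ) else 0) = 0; exact if_neg (by decide)
      have he2 : u 0 2 = 1 := by
        rw [hu0]; show (if (2 : Fin 4) = 2 then (1:ℝ) else 0) = 1; exact if_pos rfl
      have he3 : u 0 3 = 0 := by
        rw [hu0]; show (if (3 : Fin 4) = 2 then (1:ℝ) else 0) = 0; exact if_neg (by decide)
      set c₀ : ℝ := 2*a^2*(1+ε*k)/Γ with hc₀def
      have hup : ∀ t ≥ (0:ℝ), ((u t 0)*(u t 0) + (u t 1)*(u t 1))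
          + ((u t 2)*(u t 2) + (u t 3)*(u t 3)) ≤ Real.exp (2*γ*t + c₀) := by
        intro t ht
        have h1 := (hb t ht).1
        rw [he0, he1, he2, he3] at h1
        calc ((u t 0)*(u t 0) + (u t 1)*(u t 1)) + ((u t 2)*(u t 2) + (u t 3)*(u t 3))
            ≤ Real.exp c₀ * Real.exp (2*γ*t) := by nlinarith [h1]
          _ = Real.exp (2*γ*t + c₀) := by rw [Real.exp_add]; ring
      have hlow : ∀ t ≥ (0:ℝ), Real.exp (2*γ*t) ≤ ((u t 0)*(u t 0) + (u t 1)*(u t 1))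
          + ((u t 2)*(u t 2) + (u t 3)*(u t 3)) := by
        intro t ht
        have h0 := (hb t ht).2
        rw [he0, he1, he2, he3] at h0
        have h1 : 1 ≤ (u t 2 * u t 2 + u t 3 * u t 3 - (u t 0 * u t 0 + u t 1 * u t 1)) *
            Real.exp (-(2 * γ * t)) := by nlinarith [h0]
        have h2 := mul_le_mul_of_nonneg_right h1 (Real.exp_pos (2*γ*t)).le
        have hprod : Real.exp (-(2*γ*t)) * Real.exp (2*γ*t) = 1 := by
          rw [← Real.exp_add]; simp
        have h3 : (u t 2 * u t 2 + u t 3 * u t 3 - (u t 0 * u t 0 + u t 1 * u t 1)) *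
            (Real.exp (-(2*γ*t)) * Real.exp (2*γ*t))
            = u t 2 * u t 2 + u t 3 * u t 3 - (u t 0 * u t 0 + u t 1 * u t 1) := by
          rw [hprod, mul_one]
        nlinarith [h2, h3, sq_nonneg (u t 0), sq_nonneg (u t 1)]
      have hn1 : ∀ t ≥ (0:ℝ), ‖u t‖ ≤ Real.exp (γ * t + c₀ / 2) := by
        intro t ht
        have h2 := pi4_norm_le_sqrt (u t)
        have h3 := Real.sqrt_le_sqrt (hup t ht)
        have h4 : Real.sqrt (Real.exp (2*γ*t + c₀)) = Real.exp (γ * t + c₀ / 2) := by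
          rw [show 2*γ*t + c₀ = (γ*t + c₀/2) + (γ*t + c₀/2) by ring, Real.exp_add,
            Real.sqrt_mul_self (Real.exp_nonneg _)]
        rw [h4] at h3
        exact h2.trans h3
      have hn2 : ∀ t ≥ (0:ℝ), Real.exp (γ * t) ≤ 2 * ‖u t‖ := by
        intro t ht
        have hsq : ∀ i : Fin 4, (u t i) * (u t i) ≤ ‖u t‖ * ‖u t‖ := by
          intro i
          have h := norm_le_pi_norm (u t) i
          rw [Real.norm_eq_abs] at h
          nlinarith [abs_nonneg (u t i), abs_mul_abs_self (u t i), norm_nonneg (u t)]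
        have h5 : Real.exp (2*γ*t) ≤ (2*‖u t‖) * (2*‖u t‖) := by
          have := hlow t ht
          nlinarith [hsq 0, hsq 1, hsq 2, hsq 3]
        have h6 : Real.exp (γ * t) = Real.sqrt (Real.exp (2*γ*t)) := by
          rw [show 2*γ*t = γ*t + γ*t by ring, Real.exp_add,
            Real.sqrt_mul_self (Real.exp_nonneg _)]
        rw [h6]
        calc Real.sqrt (Real.exp (2*γ*t)) ≤ Real.sqrt ((2*‖u t‖) * (2*‖u t‖)) :=
              Real.sqrt_le_sqrt h5
          _ = 2*‖u t‖ := Real.sqrt_mul_self (by positivity)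
      -- limit computation
      have hval : Γ * (2 * ε * k - 1) = γ - Γ := by rw [hγ]; ring
      rw [hval]
      have hpos : ∀ t ≥ (0:ℝ), 0 < ‖u t‖ := by
        intro t ht
        have := hn2 t ht
        nlinarith [Real.exp_pos (γ * t)]
      have hLlo : ∀ t ≥ (0:ℝ), (γ - Γ) * t - Real.log 2
          ≤ Real.log (Real.exp (-Γ * t) * ‖u t‖) := by
        intro t ht
        have h1 : Real.exp ((γ - Γ) * t) / 2 ≤ Real.exp (-Γ * t) * ‖u t‖ := by
          have h2 := mul_le_mul_of_nonneg_left (hn2 t ht) (Real.exp_pos (-Γ * t)).le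
          rw [show (γ - Γ) * t = -Γ * t + γ * t by ring, Real.exp_add]
          nlinarith
        have h3 := Real.log_le_log (by positivity) h1
        rwa [Real.log_div (Real.exp_ne_zero _) two_ne_zero, Real.log_exp] at h3
      have hLhi : ∀ t ≥ (0:ℝ), Real.log (Real.exp (-Γ * t) * ‖u t‖)
          ≤ (γ - Γ) * t + c₀ / 2 := by
        intro t ht
        have h1 : Real.exp (-Γ * t) * ‖u t‖ ≤ Real.exp ((γ - Γ) * t + c₀ / 2) := by
          have h2 := mul_le_mul_of_nonneg_left (hn1 t ht) (Real.exp_pos (-Γ * t)).le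
          rwa [← Real.exp_add, show -Γ * t + (γ * t + c₀ / 2) = (γ - Γ) * t + c₀ / 2 by ring]
            at h2
        have h3 := Real.log_le_log (mul_pos (Real.exp_pos _) (hpos t ht)) h1
        rwa [Real.log_exp] at h3
      have hlim1 : Tendsto (fun t : ℝ => ((γ - Γ) * t - Real.log 2) / t) atTop (𝓝 (γ - Γ)) := by
        have h1 : Tendsto (fun t : ℝ => (γ - Γ) + (- Real.log 2) / t) atTop (𝓝 ((γ - Γ) + 0)) :=
          tendsto_const_nhds.add (Tendsto.div_atTop tendsto_const_nhds tendsto_id)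
        rw [add_zero] at h1
        refine h1.congr' ?_
        filter_upwards [eventually_gt_atTop (0:ℝ)] with t ht
        field_simp
        ring
      have hlim2 : Tendsto (fun t : ℝ => ((γ - Γ) * t + c₀ / 2) / t) atTop (𝓝 (γ - Γ)) := by
        have h1 : Tendsto (fun t : ℝ => (γ - Γ) + (c₀ / 2) / t) atTop (𝓝 ((γ - Γ) + 0)) :=
          tendsto_const_nhds.add (Tendsto.div_atTop tendsto_const_nhds tendsto_id)
        rw [add_zero] at h1
        refine h1.congr' ?_
        filter_upwards [eventually_gt_atTop (0:ℝ)] with t ht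
        field_simp
      refine tendsto_of_tendsto_of_tendsto_of_le_of_le' hlim1 hlim2 ?_ ?_
      · filter_upwards [eventually_ge_atTop (0:ℝ), eventually_gt_atTop (0:ℝ)] with t ht ht0
        exact div_le_div_of_nonneg_right (hLlo t ht) ht0.le
      · filter_upwards [eventually_ge_atTop (0:ℝ), eventually_gt_atTop (0:ℝ)] with t ht ht0
        exact div_le_div_of_nonneg_right (hLhi t ht) ht0.le
end

section
/- Fix real parameters a > 0, Γ > 0, ε > 0, δ > 0, k > 0 with εδk > 2Γ, and set γ = 2εkΓ. Let E(t) = 4a²·exp(−2Γt), let M_δ = M − ε²δk²·I₄ with M = [[−γ, k²(εk−2)/2, 0, 0], [−k²(εk−2)/2, −γ, 0, 0], [0, 0, γ, −k²(2+εk)/2], [0, 0, k²(2+εk)/2, γ]], and let N = (1/2)·[[0, 1+5εk, 0, 1+εk], [−(1+5εk), 0, 1+εk, 0], [0, 1+εk, 0, 1−3εk], [1+εk, 0, −(1−3εk), 0]]. Then every differentiable function u : [0,∞) → ℝ⁴ satisfying u'(t) = (M_δ + E(t)N)·u(t) for all t ≥ 0 tends to zero: ‖u(t)‖ → 0 as t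 → ∞. -/
private lemma quad_bound (γ ε δ k : ℝ) (Ev : ℝ) (hE : 0 ≤ Ev) (hγ : 0 ≤ γ) (hεk : 0 < ε * k)
    (M Mδ N : Matrix (Fin 4) (Fin 4) ℝ)
    (hM : M = !![-γ, k ^ 2 * (ε * k - 2) / 2, 0, 0;
                 -(k ^ 2 * (ε * k - 2) / 2), -γ, 0, 0;
                 0, 0, γ, -(k ^ 2 * (2 + ε * k) / 2);
                 0, 0, k ^ 2 * (2 + ε * k) / 2, γ])
    (hMδ : Mδ = M - (ε ^ 2 * δ * k ^ 2) • (1 : Matrix (Fin 4) (Fin 4) ℝ))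
    (hN : N = (1 / 2 : ℝ) • !![0, 1 + 5 * ε * k, 0, 1 + ε * k;
                               -(1 + 5 * ε * k), 0, 1 + ε * k, 0;
                               0, 1 + ε * k, 0, 1 - 3 * ε * k;
                               1 + ε * k, 0, -(1 - 3 * ε * k), 0])
    (x : Fin 4 → ℝ) :
    2 * (x 0 * ((Mδ + Ev • N).mulVec x) 0) + 2 * (x 1 * ((Mδ + Ev • N).mulVec x) 1)
      + 2 * (x 2 * ((Mδ + Ev • N).mulVec x) 2) + 2 * (x 3 * ((Mδ + Ev • N).mulVec x) 3)
      ≤ 2 * (-(ε ^ 2 * δ * k ^ 2 - γ) + (1 + ε * k) * Ev)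
          * (x 0 ^ 2 + x 1 ^ 2 + x 2 ^ 2 + x 3 ^ 2) := by
  simp only [hMδ, hM, hN, Matrix.sub_mulVec, Matrix.add_mulVec, Matrix.smul_mulVec,
    Matrix.one_mulVec, Pi.sub_apply, Pi.smul_apply, smul_eq_mul]
  simp only [Pi.add_apply, Pi.sub_apply, Pi.smul_apply, smul_eq_mul, Matrix.mulVec,
    dotProduct, Matrix.smul_apply, Fin.sum_univ_four, Matrix.cons_val',
    Matrix.cons_val_zero, Matrix.cons_val_one, Matrix.head_cons, Matrix.empty_val',
    Matrix.cons_val_fin_one, Matrix.cons_val_two, Matrix.tail_cons, Matrix.cons_val_three,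
    Matrix.vecHead, Matrix.vecTail, Function.comp, Matrix.cons_val_succ]
  simp [Matrix.vecHead, Matrix.vecTail, Matrix.cons_val_succ', Fin.succ_one_eq_two]
  norm_num [Matrix.vecHead, Matrix.vecTail]
  nlinarith [mul_nonneg hE (sq_nonneg (x 0 - x 3)), mul_nonneg hE (sq_nonneg (x 1 - x 2)),
    mul_nonneg hE (sq_nonneg (x 0 + x 3)), mul_nonneg hE (sq_nonneg (x 1 + x 2)),
    mul_nonneg hγ (sq_nonneg (x 0)), mul_nonneg hγ (sq_nonneg (x 1)),
    mul_nonneg hE (sq_nonneg (x 0)), mul_nonneg hE (sq_nonneg (x 1)),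
    mul_nonneg hE (sq_nonneg (x 2)), mul_nonneg hE (sq_nonneg (x 3)),
    mul_nonneg hE hεk.le, sq_nonneg (x 0), sq_nonneg (x 1), sq_nonneg (x 2), sq_nonneg (x 3),
    mul_nonneg (mul_nonneg hE hεk.le) (sq_nonneg (x 0 - x 3)),
    mul_nonneg (mul_nonneg hE hεk.le) (sq_nonneg (x 1 + x 2)),
    mul_nonneg (mul_nonneg hE hεk.le) (sq_nonneg (x 0 + x 3)),
    mul_nonneg (mul_nonneg hE hεk.le) (sq_nonneg (x 1 - x 2))]

set_option maxHeartbeats 1000000 in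
/-- With diffusion dominating the viscosity (`εδk > 2Γ`), every solution of the linearized
mode system `u'(t) = (M_δ + E(t)N)u(t)` tends to zero as `t → ∞`. -/
theorem stmt_7 (a Γ ε δ k : ℝ) (ha : 0 < a) (hΓ : 0 < Γ) (hε : 0 < ε) (hδ : 0 < δ)
    (hk : 0 < k) (hdom : 2 * Γ < ε * δ * k)
    (γ : ℝ) (hγ : γ = 2 * ε * k * Γ)
    (E : ℝ → ℝ) (hE : ∀ t, E t = 4 * a ^ 2 * Real.exp (-2 * Γ * t))
    (M Mδ N : Matrix (Fin 4) (Fin 4) ℝ)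
    (hM : M = !![-γ, k ^ 2 * (ε * k - 2) / 2, 0, 0;
                 -(k ^ 2 * (ε * k - 2) / 2), -γ, 0, 0;
                 0, 0, γ, -(k ^ 2 * (2 + ε * k) / 2);
                 0, 0, k ^ 2 * (2 + ε * k) / 2, γ])
    (hMδ : Mδ = M - (ε ^ 2 * δ * k ^ 2) • (1 : Matrix (Fin 4) (Fin 4) ℝ))
    (hN : N = (1 / 2 : ℝ) • !![0, 1 + 5 * ε * k, 0, 1 + ε * k;
                               -(1 + 5 * ε * k), 0, 1 + ε * k, 0;
                               0, 1 + ε * k, 0, 1 - 3 * ε * k;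
                               1 + ε * k, 0, -(1 - 3 * ε * k), 0])
    (u : ℝ → Fin 4 → ℝ)
    (hu : ∀ t ≥ (0 : ℝ), HasDerivWithinAt u ((Mδ + E t • N).mulVec (u t)) (Set.Ici 0) t) :
    Filter.Tendsto (fun t : ℝ => ‖u t‖) Filter.atTop (nhds 0) := by
  have hεk : 0 < ε * k := mul_pos hε hk
  have hγ0 : 0 ≤ γ := by rw [hγ]; positivity
  set c : ℝ := ε ^ 2 * δ * k ^ 2 - γ with hcdef
  have hc : 0 < c := by
    have h1 : 0 < ε * k * (ε * δ * k - 2 * Γ) := mul_pos hεk (by linarith)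
    rw [hcdef, hγ]; nlinarith [h1]
  set C : ℝ := 1 + ε * k with hCdef
  have hC : 0 < C := by rw [hCdef]; linarith
  have hE0 : ∀ t, 0 ≤ E t := fun t => by rw [hE]; positivity
  set w : ℝ → Fin 4 → ℝ := fun t => (Mδ + E t • N).mulVec (u t) with hwdef
  set V : ℝ → ℝ := fun t => u t 0 ^ 2 + u t 1 ^ 2 + u t 2 ^ 2 + u t 3 ^ 2 with hVdef
  have hV0 : ∀ t, 0 ≤ V t := fun t => by simp only [hVdef]; positivity
  set DV : ℝ → ℝ := fun t =>
      2 * (u t 0 * w t 0) + 2 * (u t 1 * w t 1) + 2 * (u t 2 * w t 2) + 2 * (u t 3 * w t 3)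
    with hDVdef
  -- derivative of V
  have hVd : ∀ t ∈ Set.Ici (0 : ℝ), HasDerivWithinAt V (DV t) (Set.Ici 0) t := by
    intro t ht
    have h := hasDerivWithinAt_pi.mp (hu t ht)
    have hsq : ∀ i : Fin 4, HasDerivWithinAt (fun s => u s i ^ 2) (2 * (u t i * w t i))
        (Set.Ici 0) t := by
      intro i
      have := (h i).fun_pow 2
      norm_num at this
      convert this using 1
      · rfl
      · rfl
      · ring
    simpa only [hVdef, hDVdef, Pi.add_def] using (((hsq 0).add (hsq 1)).add (hsq 2)).add (hsq 3)
  -- the differential inequality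
  have hDle : ∀ t, DV t ≤ 2 * (-c + C * E t) * V t := by
    intro t
    have key := quad_bound γ ε δ k (E t) (hE0 t) hγ0 hεk M Mδ N hM hMδ hN (u t)
    simp only [hDVdef, hVdef, hcdef, hCdef, hwdef]
    exact key
  -- the weight function
  set ψ : ℝ → ℝ := fun t => 2 * c * t + 4 * C * a ^ 2 / Γ * Real.exp (-2 * Γ * t) with hψdef
  have hψd : ∀ x : ℝ, HasDerivAt ψ (2 * c - 2 * C * E x) x := by
    intro x
    have h1 : HasDerivAt (fun t : ℝ => -2 * Γ * t) (-2 * Γ) x := by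
      simpa using (hasDerivAt_id x).const_mul (-2 * Γ)
    have h2 := (h1.exp).const_mul (4 * C * a ^ 2 / Γ)
    have h3 : HasDerivAt (fun t : ℝ => 2 * c * t) (2 * c) x := by
      simpa using (hasDerivAt_id x).const_mul (2 * c)
    have h4 := h3.add h2
    have : 2 * c + 4 * C * a ^ 2 / Γ * (Real.exp (-2 * Γ * x) * (-2 * Γ))
        = 2 * c - 2 * C * E x := by
      rw [hE]; field_simp; ring
    rw [this] at h4
    exact h4
  set W : ℝ → ℝ := fun t => Real.exp (ψ t) * V t with hWdef
  have hWd : ∀ t ∈ Set.Ici (0 : ℝ), HasDerivWithinAt W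
      (Real.exp (ψ t) * (2 * c - 2 * C * E t) * V t + Real.exp (ψ t) * DV t) (Set.Ici 0) t := by
    intro t ht
    exact ((hψd t).exp.hasDerivWithinAt).mul (hVd t ht)
  have hanti : AntitoneOn W (Set.Ici 0) := by
    apply antitoneOn_of_hasDerivWithinAt_nonpos (convex_Ici 0)
      (fun x hx => (hWd x hx).continuousWithinAt)
      (f' := fun t => Real.exp (ψ t) * (2 * c - 2 * C * E t) * V t + Real.exp (ψ t) * DV t)
    · intro x hx
      rw [interior_Ici] at hx ⊢
      exact (hWd x (Set.Ioi_subset_Ici_self hx)).mono Set.Ioi_subset_Ici_self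
    · intro x hx
      have hD := hDle x
      have he := (Real.exp_pos (ψ x)).le
      have h1 := mul_le_mul_of_nonneg_left hD he
      nlinarith [h1]
  -- decay of V
  have hVle : ∀ t : ℝ, 0 ≤ t → V t ≤ W 0 * (Real.exp (2 * c * t))⁻¹ := by
    intro t ht
    have hW0 : W t ≤ W 0 := hanti (Set.self_mem_Ici) ht ht
    have hψge : 2 * c * t ≤ ψ t := by
      simp only [hψdef]
      have : 0 ≤ 4 * C * a ^ 2 / Γ * Real.exp (-2 * Γ * t) := by positivity
      linarith
    have h1 : Real.exp (2 * c * t) * V t ≤ W t := by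
      simp only [hWdef]
      exact mul_le_mul_of_nonneg_right (Real.exp_le_exp.mpr hψge) (hV0 t)
    have h2 : Real.exp (2 * c * t) * V t ≤ W 0 := le_trans h1 hW0
    rw [← div_eq_mul_inv, le_div_iff₀ (Real.exp_pos _)]
    nlinarith [h2]
  have hbound : Filter.Tendsto (fun t => W 0 * (Real.exp (2 * c * t))⁻¹)
      Filter.atTop (nhds 0) := by
    have hexp : Filter.Tendsto (fun t : ℝ => Real.exp (2 * c * t)) Filter.atTop Filter.atTop :=
      Real.tendsto_exp_atTop.comp
        (Filter.Tendsto.const_mul_atTop (by linarith : (0:ℝ) < 2 * c) Filter.tendsto_id)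
    have := hexp.inv_tendsto_atTop.const_mul (W 0)
    simpa using this
  have hVtend : Filter.Tendsto V Filter.atTop (nhds 0) := by
    apply squeeze_zero' (Filter.Eventually.of_forall hV0) _ hbound
    filter_upwards [Filter.eventually_ge_atTop (0:ℝ)] with t ht
    exact hVle t ht
  -- conclude
  have hsqrt : Filter.Tendsto (fun t => Real.sqrt (V t)) Filter.atTop (nhds 0) := by
    have := (Real.continuous_sqrt.tendsto 0).comp hVtend
    simpa [Function.comp_def] using this
  apply squeeze_zero (fun t => norm_nonneg _) _ hsqrt
  intro t
  rw [pi_norm_le_iff_of_nonneg (Real.sqrt_nonneg _)]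
  intro i
  rw [Real.norm_eq_abs, ← Real.sqrt_sq_eq_abs]
  apply Real.sqrt_le_sqrt
  simp only [hVdef]
  have hsqs := fun j : Fin 4 => sq_nonneg (u t j)
  fin_cases i
  · show u t 0 ^ 2 ≤ _
    nlinarith [hsqs 1, hsqs 2, hsqs 3]
  · show u t 1 ^ 2 ≤ _
    nlinarith [hsqs 0, hsqs 2, hsqs 3]
  · show u t 2 ^ 2 ≤ _
    nlinarith [hsqs 0, hsqs 1, hsqs 3]
  · show u t 3 ^ 2 ≤ _
    nlinarith [hsqs 0, hsqs 1, hsqs 2]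
end

section
/- Fix real parameters a > 0, Γ > 0, ε > 0, k > 0. Set c(t) = 2a²(1+εk)e^(−2Γt) and α(t) = −k² + c(t). Suppose C, D : [0,∞) → ℂ are differentiable and satisfy i·C'(t) + α(t)·C(t) + c(t)·conj(D(t)) = 0 and i·D'(t) + α(t)·D(t) + c(t)·conj(C(t)) = 0 for all t ≥ 0. Then U(t) := C(t) + conj(D(t)) is twice differentiable and satisfies U''(t) + k²·(k² − 4a²(1+εk)e^(−2Γt))·U(t) = 0 for all t ≥ 0. -/
/-- If `C, D : [0,∞) → ℂ` solve the non-viscous first-order system (CDeq with γ = 0), then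
`U(t) = C(t) + conj(D(t))` is twice differentiable and solves equation (2de0):
`U'' + k²(k² − 4a²(1+εk)e^{−2Γt})U = 0`. -/
theorem stmt_9 (a Γ ε k : ℝ) (ha : 0 < a) (hΓ : 0 < Γ) (hε : 0 < ε) (hk : 0 < k)
    (c α : ℝ → ℝ)
    (hc : ∀ t, c t = 2 * a ^ 2 * (1 + ε * k) * Real.exp (-2 * Γ * t))
    (hα : ∀ t, α t = -k ^ 2 + c t)
    (C D C' D' : ℝ → ℂ)
    (hC : ∀ t ≥ (0 : ℝ), HasDerivWithinAt C (C' t) (Set.Ici 0) t)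
    (hD : ∀ t ≥ (0 : ℝ), HasDerivWithinAt D (D' t) (Set.Ici 0) t)
    (heqC : ∀ t ≥ (0 : ℝ),
      Complex.I * C' t + (α t : ℂ) * C t + (c t : ℂ) * starRingEnd ℂ (D t) = 0)
    (heqD : ∀ t ≥ (0 : ℝ),
      Complex.I * D' t + (α t : ℂ) * D t + (c t : ℂ) * starRingEnd ℂ (C t) = 0)
    (U : ℝ → ℂ) (hU : ∀ t : ℝ, U t = C t + starRingEnd ℂ (D t)) :
    ∃ U' U'' : ℝ → ℂ, ∀ t ≥ (0 : ℝ),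
      HasDerivWithinAt U (U' t) (Set.Ici 0) t ∧
      HasDerivWithinAt U' (U'' t) (Set.Ici 0) t ∧
      U'' t + (k : ℂ) ^ 2 *
        ((k : ℂ) ^ 2 - 4 * (a : ℂ) ^ 2 * (1 + (ε : ℂ) * (k : ℂ)) *
          Complex.exp (-2 * (Γ : ℂ) * t)) * U t = 0 := by
  refine ⟨fun t => -Complex.I * (k : ℂ) ^ 2 * (C t - starRingEnd ℂ (D t)),
    fun t => -Complex.I * (k : ℂ) ^ 2 * (C' t - starRingEnd ℂ (D' t)), fun t ht => ?_⟩
  have h1 := heqC t ht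
  have h2c : -Complex.I * starRingEnd ℂ (D' t) + (α t : ℂ) * starRingEnd ℂ (D t)
      + (c t : ℂ) * C t = 0 := by
    have h := congrArg (starRingEnd ℂ) (heqD t ht)
    simp only [map_add, map_mul, Complex.conj_I, Complex.conj_ofReal, map_zero,
      RingHomCompTriple.comp_apply, RingHom.id_apply] at h
    linear_combination h
  have hC'val : C' t = Complex.I * ((α t : ℂ) * C t + (c t : ℂ) * starRingEnd ℂ (D t)) := by
    linear_combination (-Complex.I) * h1 + C' t * Complex.I_sq
  have hD'val : starRingEnd ℂ (D' t)
      = -Complex.I * ((α t : ℂ) * starRingEnd ℂ (D t) + (c t : ℂ) * C t) := by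
    linear_combination Complex.I * h2c + starRingEnd ℂ (D' t) * Complex.I_sq
  have hαℂ : (α t : ℂ) = -(k : ℂ) ^ 2 + (c t : ℂ) := by
    rw [hα t]; push_cast; ring
  have hcℂ : (c t : ℂ) = 2 * (a : ℂ) ^ 2 * (1 + (ε : ℂ) * (k : ℂ))
      * Complex.exp (-2 * (Γ : ℂ) * t) := by
    rw [hc t]; push_cast [Complex.ofReal_exp]; ring
  have hUfun : U = fun s => C s + starRingEnd ℂ (D s) := funext hU
  refine ⟨?_, ?_, ?_⟩
  · rw [hUfun]
    have hd : HasDerivWithinAt (fun s => C s + starRingEnd ℂ (D s))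
        (C' t + starRingEnd ℂ (D' t)) (Set.Ici 0) t := (hC t ht).add ((hD t ht).star)
    convert hd using 1
    rw [hC'val, hD'val, hαℂ]; ring
  · have hd : HasDerivWithinAt (fun s => -Complex.I * (k : ℂ) ^ 2 * (C s - starRingEnd ℂ (D s)))
        (-Complex.I * (k : ℂ) ^ 2 * (C' t - starRingEnd ℂ (D' t))) (Set.Ici 0) t :=
      ((hC t ht).sub ((hD t ht).star)).const_mul (-Complex.I * (k : ℂ) ^ 2)
    exact hd
  · beta_reduce
    rw [hU t, hC'val, hD'val, hαℂ, hcℂ]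
    linear_combination ((k : ℂ) ^ 2 * ((k : ℂ) ^ 2 - 4 * (a : ℂ) ^ 2 * (1 + (ε : ℂ) * (k : ℂ))
      * Complex.exp (-2 * (Γ : ℂ) * t)) * (C t + starRingEnd ℂ (D t))) * Complex.I_sq
end

section
/- Let γ > 0 and T > 0 be real numbers, let G : [0,T] → ℝ be continuous with G(t) ≥ γ² for all t ∈ [0,T], and let ρ : [0,T] → ℝ be twice differentiable with ρ''(t) = G(t)·ρ(t) for all t ∈ [0,T], ρ(0) > 0, and ρ'(0) ≥ γ·ρ(0). Then ρ(t) > 0 for all t ∈ [0,T], and moreover ρ(t+s) ≥ ρ(t)·e^(γs) for all s, t ≥ 0 with t + s ≤ T. -/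
/-!
Integrating factors turn both differential inequalities into monotonicity statements. Where
`ρ > 0` the equation gives `ρ'' ≥ γ² ρ`, so `E = ρ' - γ ρ` satisfies `E' ≥ -γ E`; hence `e^{γt} E`
is nondecreasing and `E ≥ E(0) ≥ 0`. Then `ρ' ≥ γ ρ` makes `e^{-γt} ρ` nondecreasing, which is the
exponential lower bound. Positivity follows by running this argument up to a first zero of `ρ`,
where the bound `ρ ≥ ρ(0) e^{γt} > 0` is absurd.
-/

open Set Real

lemma monotoneOn_exp_neg_mul_mul_of_mul_le_deriv {f f' : ℝ → ℝ} {a b c : ℝ}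
    (hf : ∀ t ∈ Icc a b, HasDerivWithinAt f (f' t) (Icc a b) t)
    (hle : ∀ t ∈ Ioo a b, c * f t ≤ f' t) :
    MonotoneOn (fun t => exp (-(c * t)) * f t) (Icc a b) := by
  have hderiv : ∀ t ∈ Icc a b, HasDerivWithinAt (fun t => exp (-(c * t)) * f t)
      (exp (-(c * t)) * (f' t - c * f t)) (Icc a b) t := by
    intro t ht
    have hexp : HasDerivAt (fun t => exp (-(c * t))) (exp (-(c * t)) * -(c * 1)) t :=
      ((hasDerivAt_id' t).const_mul c).neg.exp
    exact (hexp.hasDerivWithinAt.mul (hf t ht)).congr_deriv (by ring)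
  refine monotoneOn_of_hasDerivWithinAt_nonneg (f' := fun t => exp (-(c * t)) * (f' t - c * f t))
    (convex_Icc a b) (fun t ht => (hderiv t ht).continuousWithinAt) (fun t ht => ?_)
    (fun t ht => ?_)
  · exact (hderiv t (interior_subset ht)).mono interior_subset
  · rw [interior_Icc] at ht
    exact mul_nonneg (exp_pos _).le (sub_nonneg.2 (hle t ht))

lemma mul_exp_le_of_mul_le_deriv {f f' : ℝ → ℝ} {a b c : ℝ}
    (hf : ∀ t ∈ Icc a b, HasDerivWithinAt f (f' t) (Icc a b) t)
    (hle : ∀ t ∈ Ioo a b, c * f t ≤ f' t) {s t : ℝ} (hs : a ≤ s) (hst : s ≤ t) (ht : t ≤ b) :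
    f s * exp (c * (t - s)) ≤ f t := by
  have hmono := monotoneOn_exp_neg_mul_mul_of_mul_le_deriv hf hle
    ⟨hs, hst.trans ht⟩ ⟨hs.trans hst, ht⟩ hst
  calc f s * exp (c * (t - s)) = exp (-(c * s)) * f s * exp (c * t) := by
        rw [mul_sub, sub_eq_neg_add, exp_add]; ring
    _ ≤ exp (-(c * t)) * f t * exp (c * t) := by gcongr
    _ = f t := by rw [mul_right_comm, ← exp_add, neg_add_cancel, exp_zero, one_mul]

lemma mul_exp_le_of_sq_mul_le_deriv2 {f f' f'' : ℝ → ℝ} {a b γ : ℝ}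
    (hf : ∀ t ∈ Icc a b, HasDerivWithinAt f (f' t) (Icc a b) t)
    (hf' : ∀ t ∈ Icc a b, HasDerivWithinAt f' (f'' t) (Icc a b) t)
    (h2 : ∀ t ∈ Ioo a b, γ ^ 2 * f t ≤ f'' t) (h1 : γ * f a ≤ f' a)
    {s t : ℝ} (hs : a ≤ s) (hst : s ≤ t) (ht : t ≤ b) :
    f s * exp (γ * (t - s)) ≤ f t := by
  have hfirst : ∀ u ∈ Icc a b, γ * f u ≤ f' u := by
    intro u hu
    have hE := mul_exp_le_of_mul_le_deriv (f := fun u => f' u - γ * f u) (c := -γ)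
      (fun v hv => (hf' v hv).sub ((hf v hv).const_mul γ))
      (fun v hv => by linarith [h2 v hv]) le_rfl hu.1 hu.2
    have hE0 : 0 ≤ (f' a - γ * f a) * exp (-γ * (u - a)) :=
      mul_nonneg (sub_nonneg.2 h1) (exp_pos _).le
    linarith
  exact mul_exp_le_of_mul_le_deriv hf (fun u hu => hfirst u (Ioo_subset_Icc_self hu)) hs hst ht

lemma ContinuousOn.pos_of_no_first_zero {f : ℝ → ℝ} {a b : ℝ} (hf : ContinuousOn f (Icc a b))
    (ha : 0 < f a) (h : ∀ c ∈ Ioc a b, (∀ t ∈ Ioo a c, 0 < f t) → 0 < f c) :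
    ∀ t ∈ Icc a b, 0 < f t := by
  by_contra! hneg
  obtain ⟨t₀, ht₀, hft₀⟩ := hneg
  set K := Icc a b ∩ f ⁻¹' Iic 0
  obtain ⟨⟨⟨hac, hcb⟩, hfc⟩, hlow⟩ : IsLeast K (sInf K) :=
    (hf.preimage_isClosed_of_isClosed isClosed_Icc isClosed_Iic).isLeast_csInf
      ⟨t₀, ht₀, hft₀⟩ ⟨a, fun x hx => hx.1.1⟩
  have hac' : a < sInf K := hac.lt_of_ne fun hc => hfc.not_gt (hc ▸ ha)
  refine (h _ ⟨hac', hcb⟩ fun t ht => ?_).not_ge hfc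
  by_contra! hft
  exact ht.2.not_ge (hlow ⟨⟨ht.1.le, ht.2.le.trans hcb⟩, hft⟩)

theorem stmt_12_general (γ T : ℝ)
    (G ρ ρ' ρ'' : ℝ → ℝ)
    (hGγ : ∀ t ∈ Set.Icc (0 : ℝ) T, γ ^ 2 ≤ G t)
    (hρ : ∀ t ∈ Set.Icc (0 : ℝ) T, HasDerivWithinAt ρ (ρ' t) (Set.Icc 0 T) t)
    (hρ' : ∀ t ∈ Set.Icc (0 : ℝ) T, HasDerivWithinAt ρ' (ρ'' t) (Set.Icc 0 T) t)
    (heq : ∀ t ∈ Set.Icc (0 : ℝ) T, ρ'' t = G t * ρ t)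
    (h0 : 0 < ρ 0) (h1 : γ * ρ 0 ≤ ρ' 0) :
    (∀ t ∈ Set.Icc (0 : ℝ) T, 0 < ρ t) ∧
    ∀ s t : ℝ, 0 ≤ s → 0 ≤ t → t + s ≤ T → ρ t * Real.exp (γ * s) ≤ ρ (t + s) := by
  have bound : ∀ c ≤ T, (∀ t ∈ Ioo 0 c, 0 < ρ t) →
      ∀ s t, 0 ≤ s → s ≤ t → t ≤ c → ρ s * exp (γ * (t - s)) ≤ ρ t := by
    intro c hcT hpos s t hs hst htc
    have hsub : Icc 0 c ⊆ Icc 0 T := Icc_subset_Icc_right hcT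
    refine mul_exp_le_of_sq_mul_le_deriv2 (fun u hu => (hρ u (hsub hu)).mono hsub)
      (fun u hu => (hρ' u (hsub hu)).mono hsub) (fun u hu => ?_) h1 hs hst htc
    have hu' := hsub (Ioo_subset_Icc_self hu)
    rw [heq u hu']
    exact mul_le_mul_of_nonneg_right (hGγ u hu') (hpos u hu).le
  have hpos : ∀ t ∈ Icc 0 T, 0 < ρ t :=
    ContinuousOn.pos_of_no_first_zero (fun t ht => (hρ t ht).continuousWithinAt) h0
      fun c hc hpos => (mul_pos h0 (exp_pos _)).trans_le
        (bound c hc.2 hpos 0 c le_rfl hc.1.le le_rfl)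
  refine ⟨hpos, fun s t hs ht hts => ?_⟩
  simpa using bound T le_rfl (fun u hu => hpos u (Ioo_subset_Icc_self hu)) t (t + s) ht
    (by linarith) hts

/-- Comparison estimate (estg): if `ρ'' = Gρ` on `[0,T]` with `G ≥ γ² > 0`, `ρ(0) > 0` and
`ρ'(0) ≥ γρ(0)`, then `ρ > 0` on `[0,T]` and `ρ(t+s) ≥ ρ(t)e^{γs}` whenever
`s, t ≥ 0` and `t + s ≤ T`. -/
theorem stmt_12 (γ T : ℝ) (hγ : 0 < γ) (hT : 0 < T)
    (G ρ ρ' ρ'' : ℝ → ℝ)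
    (hG : ContinuousOn G (Set.Icc 0 T))
    (hGγ : ∀ t ∈ Set.Icc (0 : ℝ) T, γ ^ 2 ≤ G t)
    (hρ : ∀ t ∈ Set.Icc (0 : ℝ) T, HasDerivWithinAt ρ (ρ' t) (Set.Icc 0 T) t)
    (hρ' : ∀ t ∈ Set.Icc (0 : ℝ) T, HasDerivWithinAt ρ' (ρ'' t) (Set.Icc 0 T) t)
    (heq : ∀ t ∈ Set.Icc (0 : ℝ) T, ρ'' t = G t * ρ t)
    (h0 : 0 < ρ 0) (h1 : γ * ρ 0 ≤ ρ' 0) :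
    (∀ t ∈ Set.Icc (0 : ℝ) T, 0 < ρ t) ∧
    ∀ s t : ℝ, 0 ≤ s → 0 ≤ t → t + s ≤ T → ρ t * Real.exp (γ * s) ≤ ρ (t + s) :=
  stmt_12_general γ T G ρ ρ' ρ'' hGγ hρ hρ' heq h0 h1
end

section
/- Let γ > 0 and t₀* > 0 be real numbers, let g : [0, t₀*] → ℝ be continuous with |g(s)| ≤ |g(0)| for all s ∈ [0, t₀*], and let ρ : [0, t₀*] → ℝ be continuous with ρ(t) > 0 for all t and ρ(t₀*) ≥ ρ(s)·e^(γ(t₀*−s)) for all s ∈ [0, t₀*]. Define θ'(t₀*) := −(1/ρ(t₀*)²)·∫₀^{t₀*} g(s)·ρ(s)² ds. Then |θ'(t₀*)| ≤ (|g(0)|/(2γ))·(1 − e^(−2γ·t₀*)). -/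
/-! Squaring the growth estimate gives `ρ(s)² ≤ ρ(t₀*)² e^{-2γ(t₀*-s)}`, so the integrand `g ρ²` is
dominated by `|g(0)| ρ(t₀*)² e^{-2γ(t₀*-s)}`, whose integral over `[0, t₀*]` is
`|g(0)| ρ(t₀*)² (1 - e^{-2γt₀*}) / (2γ)`; the prefactor `1/ρ(t₀*)²` cancels `ρ(t₀*)²`. -/

open Real

lemma integral_exp_neg_mul_sub {c : ℝ} (hc : c ≠ 0) (t : ℝ) :
    ∫ s in (0 : ℝ)..t, exp (-c * (t - s)) = (1 - exp (-c * t)) / c := by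
  have hderiv : ∀ s ∈ Set.uIcc (0 : ℝ) t,
      HasDerivAt (fun s => exp (-c * (t - s)) / c) (exp (-c * (t - s))) s := by
    intro s _
    have hlin : HasDerivAt (fun s : ℝ => -c * (t - s)) c s := by
      simpa using ((hasDerivAt_id s).const_sub t).const_mul (-c)
    simpa [hc] using hlin.exp.div_const c
  rw [intervalIntegral.integral_eq_sub_of_hasDerivAt hderiv
    (Continuous.intervalIntegrable (by fun_prop) _ _)]
  simp only [sub_self, mul_zero, exp_zero, sub_zero]
  ring

lemma sq_le_sq_mul_exp_of_mul_exp_le {x y a : ℝ} (hx : 0 ≤ x) (h : x * exp a ≤ y) :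
    x ^ 2 ≤ y ^ 2 * exp (-2 * a) := by
  have hx_le : x ≤ y * exp (-a) := by
    rw [← le_div_iff₀ (exp_pos a)] at h
    rwa [exp_neg, ← div_eq_mul_inv]
  calc x ^ 2 ≤ (y * exp (-a)) ^ 2 := pow_le_pow_left₀ hx hx_le 2
    _ = y ^ 2 * exp (-2 * a) := by rw [mul_pow, ← exp_nat_mul]; ring_nf

theorem stmt_15_general (γ t₀ : ℝ) (hγ : 0 < γ) (ht₀ : 0 < t₀)
    (g ρ : ℝ → ℝ)
    (hgb : ∀ s ∈ Set.Icc (0 : ℝ) t₀, |g s| ≤ |g 0|)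
    (hρpos : ∀ s ∈ Set.Icc (0 : ℝ) t₀, 0 < ρ s)
    (hgrow : ∀ s ∈ Set.Icc (0 : ℝ) t₀, ρ s * Real.exp (γ * (t₀ - s)) ≤ ρ t₀) :
    |-(1 / (ρ t₀) ^ 2) * ∫ s in (0 : ℝ)..t₀, g s * (ρ s) ^ 2| ≤
      |g 0| / (2 * γ) * (1 - Real.exp (-2 * γ * t₀)) := by
  have hρt₀ : 0 < ρ t₀ := hρpos t₀ ⟨ht₀.le, le_rfl⟩
  have hdom : ∀ s ∈ Set.Icc (0 : ℝ) t₀,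
      ‖g s * ρ s ^ 2‖ ≤ |g 0| * ρ t₀ ^ 2 * exp (-(2 * γ) * (t₀ - s)) := by
    intro s hs
    have hρsq := sq_le_sq_mul_exp_of_mul_exp_le (hρpos s hs).le (hgrow s hs)
    rw [Real.norm_eq_abs, abs_mul, abs_sq, mul_assoc, neg_mul, mul_assoc, ← neg_mul]
    exact mul_le_mul (hgb s hs) hρsq (sq_nonneg _) (abs_nonneg _)
  have hintegral : |∫ s in (0 : ℝ)..t₀, g s * ρ s ^ 2| ≤
      |g 0| * ρ t₀ ^ 2 * ((1 - exp (-(2 * γ) * t₀)) / (2 * γ)) := by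
    rw [← integral_exp_neg_mul_sub (by positivity) t₀, ← intervalIntegral.integral_const_mul]
    exact intervalIntegral.norm_integral_le_of_norm_le ht₀.le
      (.of_forall fun s hs => hdom s (Set.Ioc_subset_Icc_self hs))
      (Continuous.intervalIntegrable (by fun_prop) _ _)
  rw [abs_mul, abs_neg, abs_of_pos (by positivity), neg_mul]
  calc 1 / ρ t₀ ^ 2 * |∫ s in (0 : ℝ)..t₀, g s * ρ s ^ 2|
      ≤ 1 / ρ t₀ ^ 2 * (|g 0| * ρ t₀ ^ 2 * ((1 - exp (-(2 * γ) * t₀)) / (2 * γ))) := by gcongr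
    _ = |g 0| / (2 * γ) * (1 - exp (-(2 * γ) * t₀)) := by field_simp

/-- The angular derivative bound from the proof of Theorem 2.6 (gtransition): if
`|g(s)| ≤ |g(0)|` on `[0, t₀*]`, `ρ > 0` is continuous and satisfies the growth estimate
`ρ(t₀*) ≥ ρ(s)e^{γ(t₀*−s)}`, then
`|θ'(t₀*)| = |−(1/ρ(t₀*)²)∫₀^{t₀*} gρ²| ≤ (|g(0)|/(2γ))(1 − e^{−2γt₀*})`. -/
theorem stmt_15 (γ t₀ : ℝ) (hγ : 0 < γ) (ht₀ : 0 < t₀)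
    (g ρ : ℝ → ℝ)
    (hg : ContinuousOn g (Set.Icc 0 t₀))
    (hgb : ∀ s ∈ Set.Icc (0 : ℝ) t₀, |g s| ≤ |g 0|)
    (hρ : ContinuousOn ρ (Set.Icc 0 t₀))
    (hρpos : ∀ s ∈ Set.Icc (0 : ℝ) t₀, 0 < ρ s)
    (hgrow : ∀ s ∈ Set.Icc (0 : ℝ) t₀, ρ s * Real.exp (γ * (t₀ - s)) ≤ ρ t₀) :
    |-(1 / (ρ t₀) ^ 2) * ∫ s in (0 : ℝ)..t₀, g s * (ρ s) ^ 2| ≤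
      |g 0| / (2 * γ) * (1 - Real.exp (-2 * γ * t₀)) :=
  stmt_15_general γ t₀ hγ ht₀ g ρ hgb hρpos hgrow
end
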